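/- arXiv:2510.07757 — 3 statements merged into one kernel-verified Lean document; each statement's English description precedes it below -/
import Mathlib

section
/- Let (Ω, F, P) be a probability space and G, H sub-σ-algebras of F. Define ρ(G,H) = sup{|corr(g,h)| : g ∈ L²(G), h ∈ L²(H), Var(g) > 0, Var(h) > 0} and φ(G,H) = sup{|P(B|A) - P(B)| : A ∈ G, B ∈ H, P(A) > 0}. Then ρ(G,H) ≤ 2·√(φ(G,H)). -/
open MeasureTheory ProbabilityTheory Finset
open scoped ENNReal

set_option linter.unusedSectionVars false
set_option maxHeartbeats 1000000

lemma abstract_cov_bound {ι κ : Type*} (s : Finset ι) (t : Finset κ)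
    (f : ι → ℝ) (g : κ → ℝ) (Pa : ι → ℝ) (Pb : κ → ℝ) (D : ι → κ → ℝ) (φ : ℝ)
    (hφ0 : 0 ≤ φ)
    (hPa : ∀ a ∈ s, 0 ≤ Pa a)
    (h1 : ∀ a ∈ s, ∑ b ∈ t, |D a b| ≤ 2 * φ * Pa a)
    (h2 : ∀ b ∈ t, ∑ a ∈ s, |D a b| ≤ 2 * Pb b) :
    |∑ a ∈ s, ∑ b ∈ t, f a * g b * D a b| ≤
      2 * Real.sqrt φ * Real.sqrt (∑ a ∈ s, f a ^ 2 * Pa a) *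
        Real.sqrt (∑ b ∈ t, g b ^ 2 * Pb b) := by
  set X : ι → ℝ := fun a => ∑ b ∈ t, g b ^ 2 * |D a b| with hX
  have hXnn : ∀ a, 0 ≤ X a := fun a => Finset.sum_nonneg fun b _ => by positivity
  -- step 2: per-a bound
  have step2 : ∀ a ∈ s, |∑ b ∈ t, g b * D a b| ≤
      Real.sqrt (X a) * Real.sqrt (2 * φ * Pa a) := by
    intro a ha
    have h1' := h1 a ha
    calc |∑ b ∈ t, g b * D a b| ≤ ∑ b ∈ t, |g b * D a b| := Finset.abs_sum_le_sum_abs _ _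
      _ = ∑ b ∈ t, (|g b| * Real.sqrt |D a b|) * Real.sqrt |D a b| := by
          refine Finset.sum_congr rfl fun b _ => ?_
          rw [abs_mul, mul_assoc, Real.mul_self_sqrt (abs_nonneg _)]
      _ ≤ Real.sqrt (∑ b ∈ t, (|g b| * Real.sqrt |D a b|) ^ 2) *
            Real.sqrt (∑ b ∈ t, Real.sqrt |D a b| ^ 2) :=
          Real.sum_mul_le_sqrt_mul_sqrt _ _ _
      _ = Real.sqrt (X a) * Real.sqrt (∑ b ∈ t, |D a b|) := by
          congr 1
          · congr 1
            refine Finset.sum_congr rfl fun b _ => ?_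
            rw [mul_pow, sq_abs, Real.sq_sqrt (abs_nonneg _)]
          · congr 1
            refine Finset.sum_congr rfl fun b _ => Real.sq_sqrt (abs_nonneg _)
      _ ≤ Real.sqrt (X a) * Real.sqrt (2 * φ * Pa a) := by
          exact mul_le_mul_of_nonneg_left (Real.sqrt_le_sqrt h1') (Real.sqrt_nonneg _)
  -- step 3: Cauchy-Schwarz in a
  have key : |∑ a ∈ s, ∑ b ∈ t, f a * g b * D a b| ≤
      Real.sqrt (∑ a ∈ s, f a ^ 2 * Pa a) * Real.sqrt (2 * φ * ∑ a ∈ s, X a) := by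
    calc |∑ a ∈ s, ∑ b ∈ t, f a * g b * D a b|
        ≤ ∑ a ∈ s, |∑ b ∈ t, f a * g b * D a b| := Finset.abs_sum_le_sum_abs _ _
      _ = ∑ a ∈ s, |f a| * |∑ b ∈ t, g b * D a b| := by
          refine Finset.sum_congr rfl fun a _ => ?_
          rw [← abs_mul, Finset.mul_sum]
          congr 1
          exact Finset.sum_congr rfl fun b _ => by ring
      _ ≤ ∑ a ∈ s, |f a| * (Real.sqrt (X a) * Real.sqrt (2 * φ * Pa a)) := by
          refine Finset.sum_le_sum fun a ha => ?_
          exact mul_le_mul_of_nonneg_left (step2 a ha) (abs_nonneg _)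
      _ = ∑ a ∈ s, (|f a| * Real.sqrt (Pa a)) * (Real.sqrt (2 * φ) * Real.sqrt (X a)) := by
          refine Finset.sum_congr rfl fun a ha => ?_
          rw [Real.sqrt_mul (by positivity) (Pa a)]
          ring
      _ ≤ Real.sqrt (∑ a ∈ s, (|f a| * Real.sqrt (Pa a)) ^ 2) *
            Real.sqrt (∑ a ∈ s, (Real.sqrt (2 * φ) * Real.sqrt (X a)) ^ 2) :=
          Real.sum_mul_le_sqrt_mul_sqrt _ _ _
      _ = Real.sqrt (∑ a ∈ s, f a ^ 2 * Pa a) * Real.sqrt (2 * φ * ∑ a ∈ s, X a) := by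
          congr 2
          · refine Finset.sum_congr rfl fun a ha => ?_
            rw [mul_pow, sq_abs, Real.sq_sqrt (hPa a ha)]
          · rw [Finset.mul_sum]
            refine Finset.sum_congr rfl fun a _ => ?_
            rw [mul_pow, Real.sq_sqrt (by positivity), Real.sq_sqrt (hXnn a)]
  -- step 4
  have step4 : ∑ a ∈ s, X a ≤ 2 * ∑ b ∈ t, g b ^ 2 * Pb b := by
    rw [hX, Finset.sum_comm]
    calc ∑ b ∈ t, ∑ a ∈ s, g b ^ 2 * |D a b|
        = ∑ b ∈ t, g b ^ 2 * ∑ a ∈ s, |D a b| := by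
          exact Finset.sum_congr rfl fun b _ => (Finset.mul_sum _ _ _).symm
      _ ≤ ∑ b ∈ t, g b ^ 2 * (2 * Pb b) := by
          refine Finset.sum_le_sum fun b hb => ?_
          exact mul_le_mul_of_nonneg_left (h2 b hb) (by positivity)
      _ = 2 * ∑ b ∈ t, g b ^ 2 * Pb b := by rw [Finset.mul_sum]; exact Finset.sum_congr rfl fun b _ => by ring
  refine key.trans ?_
  have h4 : Real.sqrt (2 * φ * ∑ a ∈ s, X a) ≤
      Real.sqrt (2 * φ * (2 * ∑ b ∈ t, g b ^ 2 * Pb b)) := by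
    apply Real.sqrt_le_sqrt
    exact mul_le_mul_of_nonneg_left step4 (by positivity)
  have h5 : Real.sqrt (2 * φ * (2 * ∑ b ∈ t, g b ^ 2 * Pb b)) =
      2 * Real.sqrt φ * Real.sqrt (∑ b ∈ t, g b ^ 2 * Pb b) := by
    rw [show 2 * φ * (2 * ∑ b ∈ t, g b ^ 2 * Pb b) = 4 * (φ * ∑ b ∈ t, g b ^ 2 * Pb b) by ring,
      Real.sqrt_mul (by norm_num), Real.sqrt_mul hφ0,
      show Real.sqrt 4 = 2 by rw [show (4:ℝ) = 2^2 by norm_num, Real.sqrt_sq (by norm_num)]]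
    ring
  calc Real.sqrt (∑ a ∈ s, f a ^ 2 * Pa a) * Real.sqrt (2 * φ * ∑ a ∈ s, X a)
      ≤ Real.sqrt (∑ a ∈ s, f a ^ 2 * Pa a) *
          Real.sqrt (2 * φ * (2 * ∑ b ∈ t, g b ^ 2 * Pb b)) := by
        exact mul_le_mul_of_nonneg_left h4 (Real.sqrt_nonneg _)
    _ = 2 * Real.sqrt φ * Real.sqrt (∑ a ∈ s, f a ^ 2 * Pa a) *
          Real.sqrt (∑ b ∈ t, g b ^ 2 * Pb b) := by rw [h5]; ring


section Aux

variable {Ω : Type*} {F : MeasurableSpace Ω} {μ : Measure Ω} [IsProbabilityMeasure μ]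

lemma integral_simple_pair {G H : Ω → ℝ} {s t : Finset ℝ}
    (hGs : ∀ ω, G ω ∈ s) (hHt : ∀ ω, H ω ∈ t)
    (hGm : ∀ a : ℝ, MeasurableSet (G ⁻¹' {a})) (hHm : ∀ b : ℝ, MeasurableSet (H ⁻¹' {b}))
    (f : ℝ → ℝ → ℝ) :
    ∫ ω, f (G ω) (H ω) ∂μ =
      ∑ a ∈ s, ∑ b ∈ t, f a b * (μ (G ⁻¹' {a} ∩ H ⁻¹' {b})).toReal := by
  have hmeas : ∀ a b : ℝ, MeasurableSet (G ⁻¹' {a} ∩ H ⁻¹' {b}) := fun a b =>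
    (hGm a).inter (hHm b)
  have hpt : ∀ ω, f (G ω) (H ω) = ∑ a ∈ s, ∑ b ∈ t,
      Set.indicator (G ⁻¹' {a} ∩ H ⁻¹' {b}) (fun _ => f a b) ω := by
    intro ω
    rw [Finset.sum_eq_single (G ω)]
    · rw [Finset.sum_eq_single (H ω)]
      · have hmem : ω ∈ G ⁻¹' {G ω} ∩ H ⁻¹' {H ω} := ⟨rfl, rfl⟩
        rw [Set.indicator_of_mem hmem]
      · intro b _ hne
        exact Set.indicator_of_notMem (fun h => hne (Set.mem_singleton_iff.1 h.2).symm) _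
      · intro h; exact absurd (hHt ω) h
    · intro a _ hne
      refine Finset.sum_eq_zero fun b _ => ?_
      exact Set.indicator_of_notMem (fun h => hne (Set.mem_singleton_iff.1 h.1).symm) _
    · intro h; exact absurd (hGs ω) h
  calc ∫ ω, f (G ω) (H ω) ∂μ
      = ∫ ω, ∑ a ∈ s, ∑ b ∈ t,
          Set.indicator (G ⁻¹' {a} ∩ H ⁻¹' {b}) (fun _ => f a b) ω ∂μ :=
        integral_congr_ae (Filter.Eventually.of_forall hpt)
    _ = ∑ a ∈ s, ∑ b ∈ t, f a b * (μ (G ⁻¹' {a} ∩ H ⁻¹' {b})).toReal := by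
        rw [integral_finset_sum]
        · refine Finset.sum_congr rfl fun a _ => ?_
          rw [integral_finset_sum]
          · refine Finset.sum_congr rfl fun b _ => ?_
            rw [integral_indicator_const _ (hmeas a b), smul_eq_mul, mul_comm]; rfl
          · intro b _
            exact (integrable_indicator_iff (hmeas a b)).2
              (integrableOn_const (measure_ne_top μ _))
        · intro a _
          refine integrable_finset_sum _ fun b _ => ?_
          exact (integrable_indicator_iff (hmeas a b)).2
            (integrableOn_const (measure_ne_top μ _))

lemma sum_meas_inter {H : Ω → ℝ} (S : Finset ℝ)
    (hHm : ∀ b : ℝ, MeasurableSet (H ⁻¹' {b}))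
    {E : Set Ω} (hE : MeasurableSet E) :
    ∑ b ∈ S, (μ (E ∩ H ⁻¹' {b})).toReal = (μ (E ∩ ⋃ b ∈ S, H ⁻¹' {b})).toReal := by
  rw [Set.inter_iUnion₂, measure_biUnion_finset]
  · rw [ENNReal.toReal_sum]
    intro b _; exact measure_ne_top μ _
  · intro b _ b' _ hbb'
    refine Set.disjoint_left.2 fun ω hω hω' => ?_
    exact hbb' (hω.2.symm.trans hω'.2)
  · intro b _
    exact hE.inter (hHm b)

lemma sum_meas_univ {H : Ω → ℝ} {t : Finset ℝ} (hHt : ∀ ω, H ω ∈ t)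
    (hHm : ∀ b : ℝ, MeasurableSet (H ⁻¹' {b}))
    {E : Set Ω} (hE : MeasurableSet E) :
    ∑ b ∈ t, (μ (E ∩ H ⁻¹' {b})).toReal = (μ E).toReal := by
  rw [sum_meas_inter t hHm hE]
  congr 2
  have : (⋃ b ∈ t, H ⁻¹' {b}) = Set.univ :=
    Set.eq_univ_of_forall fun ω => Set.mem_biUnion (hHt ω) rfl
  rw [this, Set.inter_univ]


lemma my_integrable_mul {u v : Ω → ℝ} (hu : MemLp u 2 μ) (hv : MemLp v 2 μ) :
    Integrable (fun ω => u ω * v ω) μ := by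
  refine (hu.integrable_sq.add hv.integrable_sq).mono' (hu.1.mul hv.1) ?_
  refine Filter.Eventually.of_forall fun ω => ?_
  simp only [Pi.add_apply, Real.norm_eq_abs, abs_mul]
  nlinarith [abs_nonneg (u ω), abs_nonneg (v ω), sq_abs (u ω), sq_abs (v ω),
    sq_nonneg (|u ω| - |v ω|)]

lemma my_cs {u v : Ω → ℝ} (hu : MemLp u 2 μ) (hv : MemLp v 2 μ) :
    |∫ ω, u ω * v ω ∂μ| ≤ Real.sqrt (∫ ω, u ω ^ 2 ∂μ) * Real.sqrt (∫ ω, v ω ^ 2 ∂μ) := by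
  have habs : |∫ ω, u ω * v ω ∂μ| ≤ ∫ ω, |u ω| * |v ω| ∂μ := by
    calc |∫ ω, u ω * v ω ∂μ| ≤ ∫ ω, ‖u ω * v ω‖ ∂μ := by
          rw [← Real.norm_eq_abs]
          exact norm_integral_le_integral_norm _
      _ = ∫ ω, |u ω| * |v ω| ∂μ := by simp_rw [Real.norm_eq_abs, abs_mul]
  have hpq : Real.HolderConjugate 2 2 := by constructor <;> norm_num
  have h2 : (ENNReal.ofReal (2:ℝ)) = 2 := by norm_num
  have hCS := integral_mul_le_Lp_mul_Lq_of_nonneg (μ := μ) hpq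
    (f := fun ω => |u ω|) (g := fun ω => |v ω|)
    (Filter.Eventually.of_forall fun ω => abs_nonneg _)
    (Filter.Eventually.of_forall fun ω => abs_nonneg _)
    (by rw [h2]; exact hu.abs) (by rw [h2]; exact hv.abs)
  have e1 : ∫ ω, |u ω| ^ (2:ℝ) ∂μ = ∫ ω, u ω ^ 2 ∂μ := by
    refine integral_congr_ae (.of_forall fun ω => ?_)
    show |u ω| ^ (2:ℝ) = u ω ^ 2
    rw [Real.rpow_two, sq_abs]
  have e2 : ∫ ω, |v ω| ^ (2:ℝ) ∂μ = ∫ ω, v ω ^ 2 ∂μ := by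
    refine integral_congr_ae (.of_forall fun ω => ?_)
    show |v ω| ^ (2:ℝ) = v ω ^ 2
    rw [Real.rpow_two, sq_abs]
  rw [e1, e2] at hCS
  refine habs.trans (hCS.trans_eq ?_)
  rw [Real.sqrt_eq_rpow, Real.sqrt_eq_rpow]


lemma my_bridge {u : Ω → ℝ} (hu : MemLp u 2 μ) :
    (eLpNorm u 2 μ).toReal = Real.sqrt (∫ ω, u ω ^ 2 ∂μ) := by
  set f : Lp ℝ 2 μ := hu.toLp u with hf
  have h1 : ‖f‖ = (eLpNorm u 2 μ).toReal := by
    rw [Lp.norm_toLp]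
  have h2 : (inner ℝ f f : ℝ) = ∫ ω, u ω * u ω ∂μ := by
    rw [L2.inner_def]
    refine integral_congr_ae ?_
    filter_upwards [MemLp.coeFn_toLp hu] with ω hω
    rw [RCLike.inner_apply, conj_trivial, hω]
  have h3 : (inner ℝ f f : ℝ) = ‖f‖ ^ 2 := real_inner_self_eq_norm_sq f
  have h4 : ∫ ω, u ω ^ 2 ∂μ = ‖f‖ ^ 2 := by
    rw [← h3, h2]
    exact integral_congr_ae (.of_forall fun ω => sq (u ω))
  rw [h4, Real.sqrt_sq (norm_nonneg f), h1]

lemma cov_simple (mG mH : MeasurableSpace Ω) (hG : mG ≤ F) (hH : mH ≤ F)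
    (φ : ℝ) (hφ0 : 0 ≤ φ)
    (hφ : ∀ A B : Set Ω, MeasurableSet[mG] A → MeasurableSet[mH] B →
      |(μ (A ∩ B)).toReal - (μ A).toReal * (μ B).toReal| ≤ φ * (μ A).toReal)
    {G H : Ω → ℝ} {s t : Finset ℝ} (hGs : ∀ ω, G ω ∈ s) (hHt : ∀ ω, H ω ∈ t)
    (hGm : ∀ a : ℝ, MeasurableSet[mG] (G ⁻¹' {a}))
    (hHm : ∀ b : ℝ, MeasurableSet[mH] (H ⁻¹' {b})) :
    |∫ ω, G ω * H ω ∂μ - (∫ ω, G ω ∂μ) * ∫ ω, H ω ∂μ| ≤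
      2 * Real.sqrt φ * Real.sqrt (∫ ω, G ω ^ 2 ∂μ) * Real.sqrt (∫ ω, H ω ^ 2 ∂μ) := by
  have hGmF : ∀ a : ℝ, MeasurableSet[F] (G ⁻¹' {a}) := fun a => hG _ (hGm a)
  have hHmF : ∀ b : ℝ, MeasurableSet[F] (H ⁻¹' {b}) := fun b => hH _ (hHm b)
  set Pa : ℝ → ℝ := fun a => (μ (G ⁻¹' {a})).toReal with hPa_def
  set Pb : ℝ → ℝ := fun b => (μ (H ⁻¹' {b})).toReal with hPb_def
  set Pab : ℝ → ℝ → ℝ := fun a b => (μ (G ⁻¹' {a} ∩ H ⁻¹' {b})).toReal with hPab_def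
  set D : ℝ → ℝ → ℝ := fun a b => Pab a b - Pa a * Pb b with hD_def
  -- sums of Pab
  have hrowsum : ∀ a : ℝ, ∑ b ∈ t, Pab a b = Pa a := fun a =>
    sum_meas_univ (F := F) (μ := μ) hHt hHmF (hGmF a)
  have hcolsum : ∀ b : ℝ, ∑ a ∈ s, Pab a b = Pb b := by
    intro b
    simp only [hPab_def, hPb_def]
    rw [← sum_meas_univ (F := F) (μ := μ) hGs hGmF (hHmF b)]
    exact Finset.sum_congr rfl fun a _ => by rw [Set.inter_comm]
  have hPasum : ∑ a ∈ s, Pa a = 1 := by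
    simp only [hPa_def]
    have := sum_meas_univ (F := F) (μ := μ) hGs hGmF MeasurableSet.univ
    simp only [Set.univ_inter] at this
    rw [this]; simp
  -- integral identities
  have I1 : ∫ ω, G ω * H ω ∂μ = ∑ a ∈ s, ∑ b ∈ t, a * b * Pab a b :=
    integral_simple_pair (F := F) (μ := μ) hGs hHt hGmF hHmF (fun a b => a * b)
  have I2 : ∫ ω, G ω ∂μ = ∑ a ∈ s, a * Pa a := by
    have := integral_simple_pair (F := F) (μ := μ) hGs hHt hGmF hHmF (fun a _ => a)
    rw [this]
    refine Finset.sum_congr rfl fun a _ => ?_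
    rw [← Finset.mul_sum, hrowsum a]
  have I3 : ∫ ω, H ω ∂μ = ∑ b ∈ t, b * Pb b := by
    have := integral_simple_pair (F := F) (μ := μ) hGs hHt hGmF hHmF (fun _ b => b)
    rw [this, Finset.sum_comm]
    refine Finset.sum_congr rfl fun b _ => ?_
    rw [← Finset.mul_sum, hcolsum b]
  have I4 : ∫ ω, G ω ^ 2 ∂μ = ∑ a ∈ s, a ^ 2 * Pa a := by
    have := integral_simple_pair (F := F) (μ := μ) hGs hHt hGmF hHmF (fun a _ => a ^ 2)
    rw [this]
    refine Finset.sum_congr rfl fun a _ => ?_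
    rw [← Finset.mul_sum, hrowsum a]
  have I5 : ∫ ω, H ω ^ 2 ∂μ = ∑ b ∈ t, b ^ 2 * Pb b := by
    have := integral_simple_pair (F := F) (μ := μ) hGs hHt hGmF hHmF (fun _ b => b ^ 2)
    rw [this, Finset.sum_comm]
    refine Finset.sum_congr rfl fun b _ => ?_
    rw [← Finset.mul_sum, hcolsum b]
  -- the covariance as a double sum
  have Icov : ∫ ω, G ω * H ω ∂μ - (∫ ω, G ω ∂μ) * ∫ ω, H ω ∂μ =
      ∑ a ∈ s, ∑ b ∈ t, a * b * D a b := by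
    rw [I1, I2, I3, Finset.sum_mul_sum]
    rw [← Finset.sum_sub_distrib]
    refine Finset.sum_congr rfl fun a _ => ?_
    rw [← Finset.sum_sub_distrib]
    exact Finset.sum_congr rfl fun b _ => by rw [hD_def]; ring
  -- partial-sum bound
  have F1 : ∀ a ∈ s, ∀ S : Finset ℝ, |∑ b ∈ S, D a b| ≤ φ * Pa a := by
    intro a _ S
    have hU : MeasurableSet[mH] (⋃ b ∈ S, H ⁻¹' {b}) :=
      S.measurableSet_biUnion fun b _ => hHm b
    have e1 : ∑ b ∈ S, Pab a b = (μ (G ⁻¹' {a} ∩ ⋃ b ∈ S, H ⁻¹' {b})).toReal := by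
      simp only [hPab_def]
      exact sum_meas_inter (F := F) (μ := μ) S hHmF (hGmF a)
    have e2 : ∑ b ∈ S, Pb b = (μ (⋃ b ∈ S, H ⁻¹' {b})).toReal := by
      simp only [hPb_def]
      have := sum_meas_inter (F := F) (μ := μ) S hHmF MeasurableSet.univ
      simpa only [Set.univ_inter] using this
    have key : ∑ b ∈ S, D a b = (μ (G ⁻¹' {a} ∩ ⋃ b ∈ S, H ⁻¹' {b})).toReal -
        (μ (G ⁻¹' {a})).toReal * (μ (⋃ b ∈ S, H ⁻¹' {b})).toReal := by
      simp only [hD_def]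
      rw [Finset.sum_sub_distrib, e1, ← Finset.mul_sum]
      simp only [hPa_def]
      rw [e2]
    rw [key]
    simp only [hPa_def]
    exact hφ _ _ (hGm a) hU
  have h1 : ∀ a ∈ s, ∑ b ∈ t, |D a b| ≤ 2 * φ * Pa a := by
    intro a ha
    rw [← Finset.sum_filter_add_sum_filter_not t (fun b => 0 ≤ D a b)]
    have e1 : ∑ b ∈ t.filter (fun b => 0 ≤ D a b), |D a b| =
        ∑ b ∈ t.filter (fun b => 0 ≤ D a b), D a b :=
      Finset.sum_congr rfl fun b hb => abs_of_nonneg (Finset.mem_filter.1 hb).2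
    have e2 : ∑ b ∈ t.filter (fun b => ¬ 0 ≤ D a b), |D a b| =
        -∑ b ∈ t.filter (fun b => ¬ 0 ≤ D a b), D a b := by
      rw [← Finset.sum_neg_distrib]
      exact Finset.sum_congr rfl fun b hb =>
        abs_of_neg (lt_of_not_ge (Finset.mem_filter.1 hb).2)
    rw [e1, e2]
    have b1 := F1 a ha (t.filter (fun b => 0 ≤ D a b))
    have b2 := F1 a ha (t.filter (fun b => ¬ 0 ≤ D a b))
    rw [abs_le] at b1 b2
    linarith [b1.2, b2.1]
  have h2 : ∀ b ∈ t, ∑ a ∈ s, |D a b| ≤ 2 * Pb b := by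
    intro b _
    have : ∀ a ∈ s, |D a b| ≤ Pab a b + Pa a * Pb b := by
      intro a _
      have h1' : (0:ℝ) ≤ Pab a b := ENNReal.toReal_nonneg
      have h2' : (0:ℝ) ≤ Pa a * Pb b :=
        mul_nonneg ENNReal.toReal_nonneg ENNReal.toReal_nonneg
      rw [hD_def, abs_le]
      constructor <;> simp only [neg_add, neg_sub] <;> linarith
    calc ∑ a ∈ s, |D a b| ≤ ∑ a ∈ s, (Pab a b + Pa a * Pb b) := Finset.sum_le_sum this
      _ = (∑ a ∈ s, Pab a b) + (∑ a ∈ s, Pa a) * Pb b := by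
          rw [Finset.sum_add_distrib, Finset.sum_mul]
      _ = Pb b + 1 * Pb b := by rw [hcolsum b, hPasum]
      _ = 2 * Pb b := by ring
  rw [Icov, I4, I5]
  exact abstract_cov_bound s t (fun a => a) (fun b => b) Pa Pb D φ hφ0
    (fun a _ => ENNReal.toReal_nonneg) h1 h2


lemma crude_cov {u v : Ω → ℝ} (hu : MemLp u 2 μ) (hv : MemLp v 2 μ) :
    |∫ ω, u ω * v ω ∂μ - (∫ ω, u ω ∂μ) * ∫ ω, v ω ∂μ| ≤
      2 * Real.sqrt (∫ ω, u ω ^ 2 ∂μ) * Real.sqrt (∫ ω, v ω ^ 2 ∂μ) := by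
  have hone : MemLp (fun _ : Ω => (1:ℝ)) 2 μ := memLp_const 1
  have hint1 : ∫ ω, (fun _ : Ω => (1:ℝ)) ω ^ 2 ∂μ = 1 := by simp
  have h2 : |∫ ω, u ω ∂μ| ≤ Real.sqrt (∫ ω, u ω ^ 2 ∂μ) := by
    have := my_cs (F := F) hu hone
    simpa [hint1] using this
  have h3 : |∫ ω, v ω ∂μ| ≤ Real.sqrt (∫ ω, v ω ^ 2 ∂μ) := by
    have := my_cs (F := F) hv hone
    simpa [hint1] using this
  have h1 := my_cs (F := F) hu hv
  have habs : |∫ ω, u ω * v ω ∂μ - (∫ ω, u ω ∂μ) * ∫ ω, v ω ∂μ| ≤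
      |∫ ω, u ω * v ω ∂μ| + |∫ ω, u ω ∂μ| * |∫ ω, v ω ∂μ| := by
    refine (abs_sub _ _).trans ?_
    rw [abs_mul]
  have hprod : |∫ ω, u ω ∂μ| * |∫ ω, v ω ∂μ| ≤
      Real.sqrt (∫ ω, u ω ^ 2 ∂μ) * Real.sqrt (∫ ω, v ω ^ 2 ∂μ) :=
    mul_le_mul h2 h3 (abs_nonneg _) (Real.sqrt_nonneg _)
  linarith

lemma cov_L2 (mG mH : MeasurableSpace Ω) (hG : mG ≤ F) (hH : mH ≤ F)
    (φ : ℝ) (hφ0 : 0 ≤ φ) (hφ1 : φ ≤ 1)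
    (hφ : ∀ A B : Set Ω, MeasurableSet[mG] A → MeasurableSet[mH] B →
      |(μ (A ∩ B)).toReal - (μ A).toReal * (μ B).toReal| ≤ φ * (μ A).toReal)
    {g h : Ω → ℝ} (hgm : Measurable[mG] g) (hhm : Measurable[mH] h)
    (hg : MemLp g 2 μ) (hh : MemLp h 2 μ) :
    |∫ ω, g ω * h ω ∂μ - (∫ ω, g ω ∂μ) * ∫ ω, h ω ∂μ| ≤
      2 * Real.sqrt φ * Real.sqrt (∫ ω, g ω ^ 2 ∂μ) * Real.sqrt (∫ ω, h ω ^ 2 ∂μ) := by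
  refine le_of_forall_pos_le_add fun δ hδ => ?_
  set Ng := Real.sqrt (∫ ω, g ω ^ 2 ∂μ) with hNg
  set Nh := Real.sqrt (∫ ω, h ω ^ 2 ∂μ) with hNh
  have hNg0 : 0 ≤ Ng := Real.sqrt_nonneg _
  have hNh0 : 0 ≤ Nh := Real.sqrt_nonneg _
  have hden : (0:ℝ) < 4 * Ng + 4 * Nh + 4 := by linarith
  set ε := min 1 (δ / (4 * Ng + 4 * Nh + 4)) with hε
  have hεpos : 0 < ε := lt_min one_pos (div_pos hδ hden)
  have hε1 : ε ≤ 1 := min_le_left _ _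
  have hεδ : ε * (4 * Ng + 4 * Nh + 4) ≤ δ :=
    (le_div_iff₀ hden).1 (min_le_right _ _)
  have hεne : (ENNReal.ofReal ε) ≠ 0 := by
    simp [ENNReal.ofReal_eq_zero, not_le, hεpos]
  -- approximate g
  have hgsm : StronglyMeasurable[mG] g := hgm.stronglyMeasurable
  have hgtrim : MemLp g 2 (μ.trim hG) :=
    ⟨hgsm.aestronglyMeasurable, by rw [eLpNorm_trim hG hgsm]; exact hg.2⟩
  obtain ⟨gs, hgs_lt, hgs_mem⟩ :=
    @MemLp.exists_simpleFunc_eLpNorm_sub_lt Ω mG 2 ℝ _ g (μ.trim hG) hgtrim ENNReal.ofNat_ne_top _ hεne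
  have hhsm : StronglyMeasurable[mH] h := hhm.stronglyMeasurable
  have hhtrim : MemLp h 2 (μ.trim hH) :=
    ⟨hhsm.aestronglyMeasurable, by rw [eLpNorm_trim hH hhsm]; exact hh.2⟩
  obtain ⟨hs, hhs_lt, hhs_mem⟩ :=
    @MemLp.exists_simpleFunc_eLpNorm_sub_lt Ω mH 2 ℝ _ h (μ.trim hH) hhtrim ENNReal.ofNat_ne_top _ hεne
  have hgs_meas : Measurable[mG] ⇑gs := @SimpleFunc.measurable Ω ℝ mG _ gs
  have hhs_meas : Measurable[mH] ⇑hs := @SimpleFunc.measurable Ω ℝ mH _ hs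
  have hgs_memμ : MemLp ⇑gs 2 μ := memLp_of_memLp_trim hG hgs_mem
  have hhs_memμ : MemLp ⇑hs 2 μ := memLp_of_memLp_trim hH hhs_mem
  -- closeness in eLpNorm over μ
  have hgsub_sm : StronglyMeasurable[mG] (g - ⇑gs) :=
    (hgm.sub hgs_meas).stronglyMeasurable
  have hhsub_sm : StronglyMeasurable[mH] (h - ⇑hs) :=
    (hhm.sub hhs_meas).stronglyMeasurable
  have hg_close : eLpNorm (g - ⇑gs) 2 μ ≤ ENNReal.ofReal ε := by
    rw [← eLpNorm_trim hG hgsub_sm]; exact hgs_lt.le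
  have hh_close : eLpNorm (h - ⇑hs) 2 μ ≤ ENNReal.ofReal ε := by
    rw [← eLpNorm_trim hH hhsub_sm]; exact hhs_lt.le
  have hgsub_mem : MemLp (fun ω => g ω - gs ω) 2 μ := hg.sub hgs_memμ
  have hhsub_mem : MemLp (fun ω => h ω - hs ω) 2 μ := hh.sub hhs_memμ
  have d1 : Real.sqrt (∫ ω, (g ω - gs ω) ^ 2 ∂μ) ≤ ε := by
    rw [← my_bridge (F := F) hgsub_mem]
    exact ENNReal.toReal_le_of_le_ofReal hεpos.le hg_close
  have d2 : Real.sqrt (∫ ω, (h ω - hs ω) ^ 2 ∂μ) ≤ ε := by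
    rw [← my_bridge (F := F) hhsub_mem]
    exact ENNReal.toReal_le_of_le_ofReal hεpos.le hh_close
  -- N gs ≤ Ng + ε
  have hNgs : Real.sqrt (∫ ω, gs ω ^ 2 ∂μ) ≤ Ng + ε := by
    rw [← my_bridge (F := F) hgs_memμ]
    have hdecomp : ⇑gs = g + (⇑gs - g) := by funext ω; simp
    have htri : eLpNorm ⇑gs 2 μ ≤ eLpNorm g 2 μ + eLpNorm (⇑gs - g) 2 μ := by
      conv_lhs => rw [hdecomp]
      exact eLpNorm_add_le hg.1 (hgs_memμ.1.sub hg.1) one_le_two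
    have hsymm : eLpNorm (⇑gs - g) 2 μ = eLpNorm (g - ⇑gs) 2 μ := eLpNorm_sub_comm _ _ _ _
    have hle : eLpNorm ⇑gs 2 μ ≤ eLpNorm g 2 μ + ENNReal.ofReal ε := by
      refine htri.trans ?_
      rw [hsymm]
      exact add_le_add_right hg_close _
    have hfin : eLpNorm g 2 μ + ENNReal.ofReal ε ≠ ⊤ :=
      ENNReal.add_ne_top.2 ⟨hg.2.ne, ENNReal.ofReal_ne_top⟩
    calc (eLpNorm ⇑gs 2 μ).toReal ≤ (eLpNorm g 2 μ + ENNReal.ofReal ε).toReal :=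
          ENNReal.toReal_mono hfin hle
      _ = Ng + ε := by
          rw [ENNReal.toReal_add hg.2.ne ENNReal.ofReal_ne_top,
            ENNReal.toReal_ofReal hεpos.le, my_bridge (F := F) hg, hNg]
  have hNhs : Real.sqrt (∫ ω, hs ω ^ 2 ∂μ) ≤ Nh + ε := by
    rw [← my_bridge (F := F) hhs_memμ]
    have hdecomp : ⇑hs = h + (⇑hs - h) := by funext ω; simp
    have htri : eLpNorm ⇑hs 2 μ ≤ eLpNorm h 2 μ + eLpNorm (⇑hs - h) 2 μ := by
      conv_lhs => rw [hdecomp]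
      exact eLpNorm_add_le hh.1 (hhs_memμ.1.sub hh.1) one_le_two
    have hsymm : eLpNorm (⇑hs - h) 2 μ = eLpNorm (h - ⇑hs) 2 μ := eLpNorm_sub_comm _ _ _ _
    have hle : eLpNorm ⇑hs 2 μ ≤ eLpNorm h 2 μ + ENNReal.ofReal ε := by
      refine htri.trans ?_
      rw [hsymm]
      exact add_le_add_right hh_close _
    have hfin : eLpNorm h 2 μ + ENNReal.ofReal ε ≠ ⊤ :=
      ENNReal.add_ne_top.2 ⟨hh.2.ne, ENNReal.ofReal_ne_top⟩
    calc (eLpNorm ⇑hs 2 μ).toReal ≤ (eLpNorm h 2 μ + ENNReal.ofReal ε).toReal :=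
          ENNReal.toReal_mono hfin hle
      _ = Nh + ε := by
          rw [ENNReal.toReal_add hh.2.ne ENNReal.ofReal_ne_top,
            ENNReal.toReal_ofReal hεpos.le, my_bridge (F := F) hh, hNh]
  -- integrability
  have ig : Integrable g μ := hg.integrable one_le_two
  have igs : Integrable ⇑gs μ := hgs_memμ.integrable one_le_two
  have ih : Integrable h μ := hh.integrable one_le_two
  have ihs : Integrable ⇑hs μ := hhs_memμ.integrable one_le_two
  have i_gh : Integrable (fun ω => g ω * h ω) μ := my_integrable_mul (F := F) hg hh
  have i_gsh : Integrable (fun ω => gs ω * h ω) μ := my_integrable_mul (F := F) hgs_memμ hh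
  have i_gshs : Integrable (fun ω => gs ω * hs ω) μ := my_integrable_mul (F := F) hgs_memμ hhs_memμ
  -- expansions
  have EA : ∫ ω, (g ω - gs ω) * h ω ∂μ = ∫ ω, g ω * h ω ∂μ - ∫ ω, gs ω * h ω ∂μ := by
    rw [← integral_sub i_gh i_gsh]
    exact integral_congr_ae (.of_forall fun ω => by ring)
  have EB : ∫ ω, (g ω - gs ω) ∂μ = ∫ ω, g ω ∂μ - ∫ ω, gs ω ∂μ := integral_sub ig igs
  have EC : ∫ ω, gs ω * (h ω - hs ω) ∂μ = ∫ ω, gs ω * h ω ∂μ - ∫ ω, gs ω * hs ω ∂μ := by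
    rw [← integral_sub i_gsh i_gshs]
    exact integral_congr_ae (.of_forall fun ω => by ring)
  have ED : ∫ ω, (h ω - hs ω) ∂μ = ∫ ω, h ω ∂μ - ∫ ω, hs ω ∂μ := integral_sub ih ihs
  set T1 := ∫ ω, (g ω - gs ω) * h ω ∂μ - (∫ ω, (g ω - gs ω) ∂μ) * ∫ ω, h ω ∂μ with hT1
  set T2 := ∫ ω, gs ω * (h ω - hs ω) ∂μ -
    (∫ ω, gs ω ∂μ) * ∫ ω, (h ω - hs ω) ∂μ with hT2
  set T3 := ∫ ω, gs ω * hs ω ∂μ - (∫ ω, gs ω ∂μ) * ∫ ω, hs ω ∂μ with hT3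
  have key : ∫ ω, g ω * h ω ∂μ - (∫ ω, g ω ∂μ) * ∫ ω, h ω ∂μ = T1 + T2 + T3 := by
    rw [hT1, hT2, hT3, EA, EB, EC, ED]
    ring
  -- bounds
  have B1 : |T1| ≤ 2 * ε * Nh := by
    have := crude_cov (μ := μ) hgsub_mem hh
    refine this.trans ?_
    exact mul_le_mul_of_nonneg_right (by linarith [d1]) hNh0
  have B2 : |T2| ≤ 2 * (Ng + ε) * ε := by
    have := crude_cov (μ := μ) hgs_memμ hhsub_mem
    refine this.trans ?_
    have h1 : 2 * Real.sqrt (∫ ω, gs ω ^ 2 ∂μ) ≤ 2 * (Ng + ε) := by linarith [hNgs]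
    exact mul_le_mul h1 d2 (Real.sqrt_nonneg _) (by linarith)
  have B3 : |T3| ≤ 2 * Real.sqrt φ * (Ng + ε) * (Nh + ε) := by
    have hsimple := cov_simple mG mH hG hH φ hφ0 hφ
      (G := ⇑gs) (H := ⇑hs) (s := @SimpleFunc.range Ω ℝ mG gs) (t := @SimpleFunc.range Ω ℝ mH hs)
      (fun ω => @SimpleFunc.mem_range_self Ω ℝ mG gs ω)
      (fun ω => @SimpleFunc.mem_range_self Ω ℝ mH hs ω)
      (fun a => @SimpleFunc.measurableSet_fiber Ω ℝ mG gs a)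
      (fun b => @SimpleFunc.measurableSet_fiber Ω ℝ mH hs b)
    refine hsimple.trans ?_
    have hsφ : 0 ≤ Real.sqrt φ := Real.sqrt_nonneg _
    have h1 : 2 * Real.sqrt φ * Real.sqrt (∫ ω, gs ω ^ 2 ∂μ) ≤ 2 * Real.sqrt φ * (Ng + ε) :=
      mul_le_mul_of_nonneg_left hNgs (by positivity)
    exact mul_le_mul h1 hNhs (Real.sqrt_nonneg _)
      (mul_nonneg (by positivity) (by linarith))
  have hsφ1 : Real.sqrt φ ≤ 1 := by
    rw [show (1:ℝ) = Real.sqrt 1 by rw [Real.sqrt_one]]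
    exact Real.sqrt_le_sqrt hφ1
  have hsφ0 : 0 ≤ Real.sqrt φ := Real.sqrt_nonneg _
  calc |∫ ω, g ω * h ω ∂μ - (∫ ω, g ω ∂μ) * ∫ ω, h ω ∂μ| = |T1 + T2 + T3| := by rw [key]
    _ ≤ |T1| + |T2| + |T3| := abs_add_three _ _ _
    _ ≤ 2 * ε * Nh + 2 * (Ng + ε) * ε + 2 * Real.sqrt φ * (Ng + ε) * (Nh + ε) := by
        linarith
    _ ≤ 2 * Real.sqrt φ * Ng * Nh + δ := by
        have hx : 0 ≤ ε * Nh + ε * Ng + ε * ε :=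
          add_nonneg (add_nonneg (mul_nonneg hεpos.le hNh0) (mul_nonneg hεpos.le hNg0))
            (mul_nonneg hεpos.le hεpos.le)
        have expand : 2 * Real.sqrt φ * (Ng + ε) * (Nh + ε) =
            2 * Real.sqrt φ * Ng * Nh + 2 * Real.sqrt φ * (ε * Nh + ε * Ng + ε * ε) := by ring
        have hb : 2 * Real.sqrt φ * (ε * Nh + ε * Ng + ε * ε) ≤
            2 * (ε * Nh + ε * Ng + ε * ε) :=
          mul_le_mul_of_nonneg_right (by linarith) hx
        have hε2 : ε * ε ≤ ε := by
          calc ε * ε ≤ ε * 1 := mul_le_mul_of_nonneg_left hε1 hεpos.le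
            _ = ε := mul_one ε
        linarith [hεδ]


end Aux

/-- The maximal correlation coefficient `ρ(G,H)` is bounded by `2·√(φ(G,H))`,
where `φ` is the uniform mixing coefficient. -/
theorem rho_le_two_sqrt_phi
    {Ω : Type*} {F : MeasurableSpace Ω} (μ : Measure Ω) [IsProbabilityMeasure μ]
    (mG mH : MeasurableSpace Ω) (hG : mG ≤ F) (hH : mH ≤ F) :
    sSup {r : ℝ | ∃ g h : Ω → ℝ,
        Measurable[mG] g ∧ Measurable[mH] h ∧
        MemLp g 2 μ ∧ MemLp h 2 μ ∧
        0 < variance g μ ∧ 0 < variance h μ ∧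
        r = |∫ ω, (g ω - ∫ x, g x ∂μ) * (h ω - ∫ x, h x ∂μ) ∂μ| /
          (Real.sqrt (variance g μ) * Real.sqrt (variance h μ))} ≤
      2 * Real.sqrt (sSup {r : ℝ | ∃ A B : Set Ω,
        MeasurableSet[mG] A ∧ MeasurableSet[mH] B ∧ 0 < (μ A).toReal ∧
        r = |(μ (A ∩ B)).toReal / (μ A).toReal - (μ B).toReal|}) := by
  set phiSet := {r : ℝ | ∃ A B : Set Ω,
    MeasurableSet[mG] A ∧ MeasurableSet[mH] B ∧ 0 < (μ A).toReal ∧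
    r = |(μ (A ∩ B)).toReal / (μ A).toReal - (μ B).toReal|} with hphiSet
  set φ := sSup phiSet with hφdef
  have hmem0 : (0:ℝ) ∈ phiSet := by
    refine ⟨Set.univ, Set.univ, MeasurableSet.univ, MeasurableSet.univ, ?_, ?_⟩
    · simp [measure_univ]
    · simp [measure_univ]
  have hub : ∀ r ∈ phiSet, r ≤ 1 := by
    rintro r ⟨A, B, hA, hB, hApos, rfl⟩
    have hx : (μ (A ∩ B)).toReal ≤ (μ A).toReal :=
      (ENNReal.toReal_le_toReal (measure_ne_top μ _) (measure_ne_top μ _)).2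
        (measure_mono Set.inter_subset_left)
    have hdiv0 : 0 ≤ (μ (A ∩ B)).toReal / (μ A).toReal :=
      div_nonneg ENNReal.toReal_nonneg ENNReal.toReal_nonneg
    have hdiv1 : (μ (A ∩ B)).toReal / (μ A).toReal ≤ 1 := (div_le_one hApos).2 hx
    have hB0 : (0:ℝ) ≤ (μ B).toReal := ENNReal.toReal_nonneg
    have hB1 : (μ B).toReal ≤ 1 := by
      have hle : μ B ≤ 1 := prob_le_one
      simpa using ENNReal.toReal_mono ENNReal.one_ne_top hle
    rw [abs_le]
    constructor <;> linarith
  have hbdd : BddAbove phiSet := ⟨1, hub⟩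
  have hφ0 : 0 ≤ φ := le_csSup hbdd hmem0
  have hφ1 : φ ≤ 1 := csSup_le ⟨0, hmem0⟩ hub
  have hφkey : ∀ A B : Set Ω, MeasurableSet[mG] A → MeasurableSet[mH] B →
      |(μ (A ∩ B)).toReal - (μ A).toReal * (μ B).toReal| ≤ φ * (μ A).toReal := by
    intro A B hA hB
    by_cases hc : 0 < (μ A).toReal
    · have hr : |(μ (A ∩ B)).toReal / (μ A).toReal - (μ B).toReal| ≤ φ :=
        le_csSup hbdd ⟨A, B, hA, hB, hc, rfl⟩
      have heq : |(μ (A ∩ B)).toReal - (μ A).toReal * (μ B).toReal| =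
          |(μ (A ∩ B)).toReal / (μ A).toReal - (μ B).toReal| * (μ A).toReal := by
        rw [← abs_of_pos hc, ← abs_mul]
        congr 1
        field_simp
        rw [abs_of_pos hc]; ring
      rw [heq]
      exact mul_le_mul_of_nonneg_right hr hc.le
    · have h0 : (μ A).toReal = 0 := le_antisymm (not_lt.1 hc) ENNReal.toReal_nonneg
      have hA0 : μ A = 0 := by
        rcases (ENNReal.toReal_eq_zero_iff _).1 h0 with h | h
        · exact h
        · exact absurd h (measure_ne_top μ A)
      have hAB0 : μ (A ∩ B) = 0 := measure_mono_null Set.inter_subset_left hA0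
      rw [h0, hAB0]
      simp
  refine Real.sSup_le ?_ (by positivity)
  rintro r ⟨g, h, hgm, hhm, hg2, hh2, hvg, hvh, rfl⟩
  set c := ∫ x, g x ∂μ with hc
  set d := ∫ x, h x ∂μ with hd
  have hg'm : Measurable[mG] (fun ω => g ω - c) := hgm.sub measurable_const
  have hh'm : Measurable[mH] (fun ω => h ω - d) := hhm.sub measurable_const
  have hg'2 : MemLp (fun ω => g ω - c) 2 μ := hg2.sub (memLp_const c)
  have hh'2 : MemLp (fun ω => h ω - d) 2 μ := hh2.sub (memLp_const d)
  have hvarg : ∫ ω, (g ω - c) ^ 2 ∂μ = variance g μ := by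
    rw [variance_eq_integral hg2.aemeasurable]
  have hvarh : ∫ ω, (h ω - d) ^ 2 ∂μ = variance h μ := by
    rw [variance_eq_integral hh2.aemeasurable]
  have hintg' : ∫ ω, (g ω - c) ∂μ = 0 := by
    rw [integral_sub (hg2.integrable one_le_two) (integrable_const c)]
    simp [hc, measure_univ]
  have key := cov_L2 (μ := μ) mG mH hG hH φ hφ0 hφ1 hφkey hg'm hh'm hg'2 hh'2
  rw [hintg', zero_mul, sub_zero, hvarg, hvarh] at key
  have hpos : 0 < Real.sqrt (variance g μ) * Real.sqrt (variance h μ) :=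
    mul_pos (Real.sqrt_pos.2 hvg) (Real.sqrt_pos.2 hvh)
  rw [div_le_iff₀ hpos]
  calc |∫ ω, (g ω - ∫ x, g x ∂μ) * (h ω - ∫ x, h x ∂μ) ∂μ|
      = |∫ ω, (g ω - c) * (h ω - d) ∂μ| := rfl
    _ ≤ 2 * Real.sqrt φ * Real.sqrt (variance g μ) * Real.sqrt (variance h μ) := key
    _ = 2 * Real.sqrt φ * (Real.sqrt (variance g μ) * Real.sqrt (variance h μ)) := by ring
end

section
/- Let G, H be sub-σ-algebras of a probability space and define ψ(G,H) = sup{ |P(A∩B)/(P(A)P(B)) - 1| : A ∈ G, B ∈ H, P(A)P(B) > 0 }, and for 1 ≤ q ≤ p ≤ ∞, ϖ_{q,p}(G,H) = sup{‖E[g|G] - E[g]‖_{L^p} : g ∈ L^q(H), ‖g‖_{L^q} ≤ 1}. Then ϖ_{q,p}(G,H) ≤ ϖ_{1,∞}(G,H) = ψ(G,H). -/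
open MeasureTheory ENNReal

variable {Ω : Type*}

/-- The weak-dependence coefficient `ϖ_{q,p}(G,H)`. -/
noncomputable def varpiCoeff {F : MeasurableSpace Ω} (μ : Measure Ω)
    (mG mH : MeasurableSpace Ω) (q p : ℝ≥0∞) : ℝ≥0∞ :=
  sSup {r : ℝ≥0∞ | ∃ g : Ω → ℝ, Measurable[mH] g ∧ eLpNorm g q μ ≤ 1 ∧
    r = eLpNorm (fun ω => (μ[g | mG]) ω - ∫ x, g x ∂μ) p μ}

/-- The ψ-mixing coefficient `ψ(G,H)`. -/
noncomputable def psiCoeff {F : MeasurableSpace Ω} (μ : Measure Ω)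
    (mG mH : MeasurableSpace Ω) : ℝ≥0∞ :=
  sSup {r : ℝ≥0∞ | ∃ A B : Set Ω, MeasurableSet[mG] A ∧ MeasurableSet[mH] B ∧
    0 < (μ A).toReal * (μ B).toReal ∧
    r = ENNReal.ofReal
      |(μ (A ∩ B)).toReal / ((μ A).toReal * (μ B).toReal) - 1|}

section Aux

lemma aux_setIntegral_const {F : MeasurableSpace Ω} (μ : Measure Ω) (A : Set Ω) (c : ℝ) :
    ∫ _ in A, c ∂μ = (μ A).toReal * c := by
  rw [setIntegral_const, smul_eq_mul, measureReal_def]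

lemma aux_setLintegral_const {F : MeasurableSpace Ω} (μ : Measure Ω) (A : Set Ω) (c : ℝ≥0∞) :
    ∫⁻ _ in A, c ∂μ = c * μ A := by
  rw [lintegral_const, Measure.restrict_apply_univ]

lemma aux_integral_indicator_const {F : MeasurableSpace Ω} (μ : Measure Ω) {B : Set Ω}
    (hB : MeasurableSet[F] B) (c : ℝ) :
    ∫ x, B.indicator (fun _ => c) x ∂μ = (μ B).toReal * c := by
  rw [integral_indicator_const _ hB, smul_eq_mul, measureReal_def]

lemma aux_lintegral_indicator {F : MeasurableSpace Ω} (μ : Measure Ω) {B : Set Ω}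
    (hB : MeasurableSet[F] B) (c : ℝ≥0∞) :
    ∫⁻ x, B.indicator (fun _ => c) x ∂μ = c * μ B := by
  rw [lintegral_indicator hB, aux_setLintegral_const]

/-- Set-level two-sided bound from the ψ-mixing coefficient. -/
lemma psi_set_bound {mG mH : MeasurableSpace Ω} {F : MeasurableSpace Ω} (μ : Measure Ω)
    [IsProbabilityMeasure μ] (hG : mG ≤ F) (hH : mH ≤ F)
    {A B : Set Ω} (hA : MeasurableSet[mG] A) (hB : MeasurableSet[mH] B) :
    μ (A ∩ B) ≤ μ A * μ B + psiCoeff μ mG mH * (μ A * μ B) ∧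
      μ A * μ B ≤ μ (A ∩ B) + psiCoeff μ mG mH * (μ A * μ B) := by
  set ψ := psiCoeff μ mG mH with hψ
  have hAfin : μ A ≠ ⊤ := measure_ne_top μ A
  have hBfin : μ B ≠ ⊤ := measure_ne_top μ B
  have hABfin : μ (A ∩ B) ≠ ⊤ := measure_ne_top μ _
  by_cases hA0 : μ A = 0
  · have h1 : μ (A ∩ B) = 0 := measure_mono_null Set.inter_subset_left hA0
    simp [h1, hA0]
  by_cases hB0 : μ B = 0
  · have h1 : μ (A ∩ B) = 0 := measure_mono_null Set.inter_subset_right hB0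
    simp [h1, hB0]
  -- both positive
  have haR : 0 < (μ A).toReal := ENNReal.toReal_pos hA0 hAfin
  have hbR : 0 < (μ B).toReal := ENNReal.toReal_pos hB0 hBfin
  have hmem : ENNReal.ofReal
      |(μ (A ∩ B)).toReal / ((μ A).toReal * (μ B).toReal) - 1| ≤ ψ := by
    apply le_sSup
    exact ⟨A, B, hA, hB, mul_pos haR hbR, rfl⟩
  by_cases hψtop : ψ = ⊤
  · have hne : μ A * μ B ≠ 0 := by
      simp [hA0, hB0]
    have : ψ * (μ A * μ B) = ⊤ := by
      rw [hψtop]; exact ENNReal.top_mul hne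
    constructor <;> rw [this] <;> simp
  · -- finite ψ
    have hcnn : 0 ≤ ψ.toReal := ENNReal.toReal_nonneg
    have habs : |(μ (A ∩ B)).toReal / ((μ A).toReal * (μ B).toReal) - 1| ≤ ψ.toReal := by
      have := hmem
      rwa [← ENNReal.ofReal_toReal hψtop, ENNReal.ofReal_le_ofReal_iff hcnn] at this
    have hprod : 0 < (μ A).toReal * (μ B).toReal := mul_pos haR hbR
    have habs' : |(μ (A ∩ B)).toReal - (μ A).toReal * (μ B).toReal| ≤
        ψ.toReal * ((μ A).toReal * (μ B).toReal) := by
      obtain ⟨h1, h2⟩ := abs_le.1 habs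
      have key : ((μ (A ∩ B)).toReal / ((μ A).toReal * (μ B).toReal) - 1) *
          ((μ A).toReal * (μ B).toReal) =
          (μ (A ∩ B)).toReal - (μ A).toReal * (μ B).toReal := by
        field_simp
      rw [abs_le]
      constructor
      · have := mul_le_mul_of_nonneg_right h1 hprod.le
        rw [key] at this; linarith
      · have := mul_le_mul_of_nonneg_right h2 hprod.le
        rw [key] at this; linarith
    have habs2 := abs_le.1 habs'
    have hMfin : μ A * μ B ≠ ⊤ := ENNReal.mul_ne_top hAfin hBfin
    have hMψfin : ψ * (μ A * μ B) ≠ ⊤ := ENNReal.mul_ne_top hψtop hMfin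
    have hMtR : (μ A * μ B).toReal = (μ A).toReal * (μ B).toReal := ENNReal.toReal_mul
    have hMψtR : (ψ * (μ A * μ B)).toReal = ψ.toReal * ((μ A).toReal * (μ B).toReal) := by
      rw [ENNReal.toReal_mul, hMtR]
    constructor
    · rw [← ENNReal.toReal_le_toReal hABfin (by finiteness)]
      rw [ENNReal.toReal_add hMfin hMψfin, hMtR, hMψtR]
      linarith [habs2.2]
    · rw [← ENNReal.toReal_le_toReal hMfin (by finiteness)]
      rw [ENNReal.toReal_add hABfin hMψfin, hMtR, hMψtR]
      linarith [habs2.1]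

/-- Two-sided bound for lintegrals of `mH`-measurable functions over `mG`-sets. -/
lemma psi_lintegral_bound {mG mH : MeasurableSpace Ω} {F : MeasurableSpace Ω} (μ : Measure Ω)
    [IsProbabilityMeasure μ] (hG : mG ≤ F) (hH : mH ≤ F)
    {A : Set Ω} (hA : MeasurableSet[mG] A) {f : Ω → ℝ≥0∞} (hf : Measurable[mH] f) :
    (∫⁻ x in A, f x ∂μ ≤ μ A * ∫⁻ x, f x ∂μ + psiCoeff μ mG mH * (μ A * ∫⁻ x, f x ∂μ)) ∧
      (μ A * ∫⁻ x, f x ∂μ ≤ ∫⁻ x in A, f x ∂μ + psiCoeff μ mG mH * (μ A * ∫⁻ x, f x ∂μ)) := by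
  set ψ := psiCoeff μ mG mH with hψ
  set ν₁ : @Measure Ω mH := (μ.restrict A).trim hH with hν₁
  set ν₂ : @Measure Ω mH := ((μ A) • μ).trim hH with hν₂
  have hν₁app : ∀ B : Set Ω, MeasurableSet[mH] B → ν₁ B = μ (A ∩ B) := by
    intro B hB
    rw [hν₁, trim_measurableSet_eq hH hB, Measure.restrict_apply (hH _ hB), Set.inter_comm]
  have hν₂app : ∀ B : Set Ω, MeasurableSet[mH] B → ν₂ B = μ A * μ B := by
    intro B hB
    rw [hν₂, trim_measurableSet_eq hH hB]; simp
  have hle₁ : ν₁ ≤ ν₂ + ψ • ν₂ := by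
    rw [Measure.le_iff]
    intro B hB
    have := (psi_set_bound μ hG hH hA hB).1
    simpa [hν₁app B hB, hν₂app B hB] using this
  have hle₂ : ν₂ ≤ ν₁ + ψ • ν₂ := by
    rw [Measure.le_iff]
    intro B hB
    have := (psi_set_bound μ hG hH hA hB).2
    simpa [hν₁app B hB, hν₂app B hB] using this
  have hI₁ : ∫⁻ x, f x ∂ν₁ = ∫⁻ x in A, f x ∂μ := lintegral_trim hH hf
  have hI₂ : ∫⁻ x, f x ∂ν₂ = μ A * ∫⁻ x, f x ∂μ := by
    rw [hν₂, lintegral_trim hH hf, lintegral_smul_measure, smul_eq_mul]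
  constructor
  · have := lintegral_mono' hle₁ (le_refl f)
    rwa [lintegral_add_measure, lintegral_smul_measure, hI₁, hI₂] at this
  · have := lintegral_mono' hle₂ (le_refl f)
    rwa [lintegral_add_measure, lintegral_smul_measure, hI₁, hI₂] at this

/-- Real-valued version of the two-sided bound. -/
lemma psi_integral_bound {mG mH : MeasurableSpace Ω} {F : MeasurableSpace Ω} (μ : Measure Ω)
    [IsProbabilityMeasure μ] (hG : mG ≤ F) (hH : mH ≤ F)
    (hψtop : psiCoeff μ mG mH ≠ ⊤)
    {A : Set Ω} (hA : MeasurableSet[mG] A) {g : Ω → ℝ} (hg : Measurable[mH] g)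
    (hgint : Integrable g μ) :
    |∫ x in A, g x ∂μ - (μ A).toReal * ∫ x, g x ∂μ| ≤
      (psiCoeff μ mG mH).toReal * ((μ A).toReal * (∫⁻ x, (‖g x‖₊ : ℝ≥0∞) ∂μ).toReal) := by
  set ψ := psiCoeff μ mG mH with hψ
  set fp : Ω → ℝ≥0∞ := fun x => ENNReal.ofReal (g x) with hfp
  set fn : Ω → ℝ≥0∞ := fun x => ENNReal.ofReal (-(g x)) with hfn
  have hfpm : Measurable[mH] fp := ENNReal.measurable_ofReal.comp hg
  have hfnm : Measurable[mH] fn := ENNReal.measurable_ofReal.comp hg.neg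
  have hsum : ∀ x, fp x + fn x = (‖g x‖₊ : ℝ≥0∞) := by
    intro x
    rcases le_total 0 (g x) with h | h
    · simp [hfp, hfn, ENNReal.ofReal_eq_zero.2 (neg_nonpos.2 h),
        ← enorm_eq_nnnorm, ← ofReal_norm, Real.norm_eq_abs, abs_of_nonneg h]
    · simp [hfp, hfn, ENNReal.ofReal_eq_zero.2 h,
        ← enorm_eq_nnnorm, ← ofReal_norm, Real.norm_eq_abs, abs_of_nonpos h]
  have hL1 : ∫⁻ x, fp x ∂μ + ∫⁻ x, fn x ∂μ = ∫⁻ x, (‖g x‖₊ : ℝ≥0∞) ∂μ := by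
    rw [← lintegral_add_left (hfpm.mono hH le_rfl)]
    exact lintegral_congr hsum
  have hL1fin : ∫⁻ x, (‖g x‖₊ : ℝ≥0∞) ∂μ ≠ ⊤ := hgint.2.ne
  have hPfin : ∫⁻ x, fp x ∂μ ≠ ⊤ := by
    refine ne_top_of_le_ne_top hL1fin ?_
    rw [← hL1]; exact le_self_add
  have hNfin : ∫⁻ x, fn x ∂μ ≠ ⊤ := by
    refine ne_top_of_le_ne_top hL1fin ?_
    rw [← hL1]; exact le_add_self
  have hPAfin : ∫⁻ x in A, fp x ∂μ ≠ ⊤ :=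
    ne_top_of_le_ne_top hPfin (lintegral_mono' Measure.restrict_le_self le_rfl)
  have hNAfin : ∫⁻ x in A, fn x ∂μ ≠ ⊤ :=
    ne_top_of_le_ne_top hNfin (lintegral_mono' Measure.restrict_le_self le_rfl)
  have hAfin : μ A ≠ ⊤ := measure_ne_top μ A
  have key : ∀ f : Ω → ℝ≥0∞, Measurable[mH] f → (∫⁻ x, f x ∂μ ≠ ⊤) →
      (∫⁻ x in A, f x ∂μ ≠ ⊤) →
      |(∫⁻ x in A, f x ∂μ).toReal - (μ A).toReal * (∫⁻ x, f x ∂μ).toReal| ≤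
        ψ.toReal * ((μ A).toReal * (∫⁻ x, f x ∂μ).toReal) := by
    intro f hfm hffin hfAfin
    obtain ⟨h1, h2⟩ := psi_lintegral_bound μ hG hH hA hfm
    have hMfin : μ A * ∫⁻ x, f x ∂μ ≠ ⊤ := ENNReal.mul_ne_top hAfin hffin
    have hψMfin : ψ * (μ A * ∫⁻ x, f x ∂μ) ≠ ⊤ := ENNReal.mul_ne_top hψtop hMfin
    rw [abs_le]
    have e1 := (ENNReal.toReal_le_toReal hfAfin (by finiteness)).2 h1
    have e2 := (ENNReal.toReal_le_toReal hMfin (by finiteness)).2 h2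
    rw [ENNReal.toReal_add hMfin hψMfin] at e1
    rw [ENNReal.toReal_add hfAfin hψMfin] at e2
    simp only [ENNReal.toReal_mul] at e1 e2
    constructor <;> linarith
  have kp := key fp hfpm hPfin hPAfin
  have kn := key fn hfnm hNfin hNAfin
  have hInt : ∫ x, g x ∂μ = (∫⁻ x, fp x ∂μ).toReal - (∫⁻ x, fn x ∂μ).toReal :=
    integral_eq_lintegral_pos_part_sub_lintegral_neg_part hgint
  have hIntA : ∫ x in A, g x ∂μ =
      (∫⁻ x in A, fp x ∂μ).toReal - (∫⁻ x in A, fn x ∂μ).toReal :=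
    integral_eq_lintegral_pos_part_sub_lintegral_neg_part (hgint.restrict)
  have hL1R : (∫⁻ x, fp x ∂μ).toReal + (∫⁻ x, fn x ∂μ).toReal
      = (∫⁻ x, (‖g x‖₊ : ℝ≥0∞) ∂μ).toReal := by
    rw [← ENNReal.toReal_add hPfin hNfin, hL1]
  rw [hInt, hIntA]
  have habs : |((∫⁻ x in A, fp x ∂μ).toReal - (∫⁻ x in A, fn x ∂μ).toReal) -
      (μ A).toReal * ((∫⁻ x, fp x ∂μ).toReal - (∫⁻ x, fn x ∂μ).toReal)| ≤
      ψ.toReal * ((μ A).toReal * (∫⁻ x, fp x ∂μ).toReal) +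
      ψ.toReal * ((μ A).toReal * (∫⁻ x, fn x ∂μ).toReal) := by
    have := abs_sub (
      (∫⁻ x in A, fp x ∂μ).toReal - (μ A).toReal * (∫⁻ x, fp x ∂μ).toReal)
      ((∫⁻ x in A, fn x ∂μ).toReal - (μ A).toReal * (∫⁻ x, fn x ∂μ).toReal)
    calc |((∫⁻ x in A, fp x ∂μ).toReal - (∫⁻ x in A, fn x ∂μ).toReal) -
        (μ A).toReal * ((∫⁻ x, fp x ∂μ).toReal - (∫⁻ x, fn x ∂μ).toReal)|
        = |((∫⁻ x in A, fp x ∂μ).toReal - (μ A).toReal * (∫⁻ x, fp x ∂μ).toReal) -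
          ((∫⁻ x in A, fn x ∂μ).toReal - (μ A).toReal * (∫⁻ x, fn x ∂μ).toReal)| := by
          ring_nf
      _ ≤ _ := by
          refine (abs_sub _ _).trans ?_
          exact add_le_add kp kn
  refine habs.trans ?_
  rw [← hL1R]
  ring_nf
  nlinarith [kp, kn]

/-- a.e. bound from set-integral bounds for an `mG`-strongly-measurable function. -/
lemma ae_bound_of_setIntegral {mG : MeasurableSpace Ω} {F : MeasurableSpace Ω} (μ : Measure Ω)
    [IsFiniteMeasure μ] (hG : mG ≤ F)
    {h : Ω → ℝ} (hmeas : StronglyMeasurable[mG] h) (hint : Integrable h μ)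
    {c : ℝ} (hc : 0 ≤ c)
    (hbound : ∀ A : Set Ω, MeasurableSet[mG] A → |∫ x in A, h x ∂μ| ≤ c * (μ A).toReal) :
    ∀ᵐ x ∂μ, |h x| ≤ c := by
  -- upper set
  have upper : μ {x | c < h x} = 0 := by
    set S := {x | c < h x} with hS
    have hSmG : MeasurableSet[mG] S := measurableSet_lt measurable_const hmeas.measurable
    have hSF : MeasurableSet[F] S := hG _ hSmG
    set f : Ω → ℝ := fun x => max (h x - c) 0 with hf
    have hfint : Integrable f μ := (hint.sub (integrable_const c)).pos_part
    have hsupp : Function.support f = S := by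
      ext x
      simp only [Function.mem_support, hf, hS, Set.mem_setOf_eq]
      constructor
      · intro hx
        by_contra hcon
        push_neg at hcon
        exact hx (max_eq_right (by linarith))
      · intro hx
        rw [max_eq_left (by linarith)]
        intro h0; linarith
    have heq : ∫ x in S, f x ∂μ = ∫ x in S, (h x - c) ∂μ := by
      refine setIntegral_congr_fun (μ := μ) hSF ?_
      intro x hx
      exact max_eq_left (by simp only [hS, Set.mem_setOf_eq] at hx; linarith)
    have hle : ∫ x in S, f x ∂μ ≤ 0 := by
      rw [heq, integral_sub hint.restrict (integrable_const c), setIntegral_const (μ := μ),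
        smul_eq_mul, mul_comm, measureReal_def]
      have := hbound S hSmG
      have h2 := abs_le.1 this
      linarith [h2.2]
    by_contra hpos
    have h0 : 0 < μ (Function.support f ∩ S) := by
      rw [hsupp, Set.inter_self]
      exact zero_lt_iff.2 hpos
    have := (setIntegral_pos_iff_support_of_nonneg_ae (μ := μ) (f := f) (s := S)
      (ae_restrict_of_ae (Filter.Eventually.of_forall fun x => le_max_right _ _))
      hfint.restrict).2 h0
    linarith
  -- lower set
  have lower : μ {x | h x < -c} = 0 := by
    set S := {x | h x < -c} with hS
    have hSmG : MeasurableSet[mG] S := measurableSet_lt hmeas.measurable measurable_const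
    have hSF : MeasurableSet[F] S := hG _ hSmG
    set f : Ω → ℝ := fun x => max (-c - h x) 0 with hf
    have hfint : Integrable f μ := ((integrable_const (-c)).sub hint).pos_part
    have hsupp : Function.support f = S := by
      ext x
      simp only [Function.mem_support, hf, hS, Set.mem_setOf_eq]
      constructor
      · intro hx
        by_contra hcon
        push_neg at hcon
        exact hx (max_eq_right (by linarith))
      · intro hx
        rw [max_eq_left (by linarith)]
        intro h0; linarith
    have heq : ∫ x in S, f x ∂μ = ∫ x in S, (-c - h x) ∂μ := by
      refine setIntegral_congr_fun (μ := μ) hSF ?_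
      intro x hx
      exact max_eq_left (by simp only [hS, Set.mem_setOf_eq] at hx; linarith)
    have hle : ∫ x in S, f x ∂μ ≤ 0 := by
      rw [heq, integral_sub (integrable_const (-c)) hint.restrict, setIntegral_const (μ := μ),
        smul_eq_mul, mul_comm, measureReal_def]
      have := hbound S hSmG
      have h2 := abs_le.1 this
      linarith [h2.1]
    by_contra hpos
    have h0 : 0 < μ (Function.support f ∩ S) := by
      rw [hsupp, Set.inter_self]
      exact zero_lt_iff.2 hpos
    have := (setIntegral_pos_iff_support_of_nonneg_ae (μ := μ) (f := f) (s := S)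
      (ae_restrict_of_ae (Filter.Eventually.of_forall fun x => le_max_right _ _))
      hfint.restrict).2 h0
    linarith
  rw [Filter.eventually_iff, mem_ae_iff]
  have hsub : {x | |h x| ≤ c}ᶜ ⊆ {x | c < h x} ∪ {x | h x < -c} := by
    intro x hx
    simp only [Set.mem_compl_iff, Set.mem_setOf_eq, not_le] at hx
    rcases le_or_gt 0 (h x) with h0 | h0
    · left; simp only [Set.mem_setOf_eq]; rwa [abs_of_nonneg h0] at hx
    · right; simp only [Set.mem_setOf_eq]; rw [abs_of_neg h0] at hx; linarith
  exact measure_mono_null hsub (measure_union_null upper lower)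

end Aux

/-- `ϖ_{q,p}(G,H) ≤ ϖ_{1,∞}(G,H) = ψ(G,H)` for `1 ≤ q ≤ p ≤ ∞`. -/
theorem varpi_le_psi
    {F : MeasurableSpace Ω} (μ : Measure Ω) [IsProbabilityMeasure μ]
    (mG mH : MeasurableSpace Ω) (hG : mG ≤ F) (hH : mH ≤ F)
    (q p : ℝ≥0∞) (hq : 1 ≤ q) (hqp : q ≤ p) :
    varpiCoeff μ mG mH q p ≤ varpiCoeff μ mG mH 1 ⊤ ∧
    varpiCoeff μ mG mH 1 ⊤ = psiCoeff μ mG mH := by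
  constructor
  · -- monotonicity part
    apply sSup_le
    rintro r ⟨g, hgH, hgq, rfl⟩
    have hgF : AEStronglyMeasurable[F] g μ := ((hgH.mono hH le_rfl)).aestronglyMeasurable
    have hg1 : eLpNorm g 1 μ ≤ 1 := (eLpNorm_le_eLpNorm_of_exponent_le hq hgF).trans hgq
    have hhm : AEStronglyMeasurable[F] (fun ω => (μ[g|mG]) ω - ∫ x, g x ∂μ) μ :=
      ((stronglyMeasurable_condExp.mono hG).aestronglyMeasurable).sub aestronglyMeasurable_const
    refine le_trans (eLpNorm_le_eLpNorm_of_exponent_le le_top hhm) (le_sSup ?_)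
    exact ⟨g, hgH, hg1, rfl⟩
  · apply le_antisymm
    · -- ϖ_{1,∞} ≤ ψ
      by_cases hψtop : psiCoeff μ mG mH = ⊤
      · rw [hψtop]; exact le_top
      apply sSup_le
      rintro r ⟨g, hgH, hg1, rfl⟩
      have hgint : Integrable g μ := by
        rw [← memLp_one_iff_integrable]
        exact ⟨(hgH.mono hH le_rfl).aestronglyMeasurable, lt_of_le_of_lt hg1 (by norm_num)⟩
      set m := ∫ x, g x ∂μ with hm
      have hbound : ∀ A : Set Ω, MeasurableSet[mG] A →
          |∫ x in A, ((μ[g|mG]) x - m) ∂μ| ≤ (psiCoeff μ mG mH).toReal * (μ A).toReal := by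
        intro A hA
        have h1 : ∫ x in A, ((μ[g|mG]) x - m) ∂μ = ∫ x in A, g x ∂μ - (μ A).toReal * m := by
          rw [integral_sub integrable_condExp.restrict (integrable_const m),
            setIntegral_condExp hG hgint hA, aux_setIntegral_const μ]
        rw [h1]
        refine (psi_integral_bound μ hG hH hψtop hA hgH hgint).trans ?_
        have hL : (∫⁻ x, (‖g x‖₊ : ℝ≥0∞) ∂μ).toReal ≤ 1 := by
          have h2 : ∫⁻ x, (‖g x‖₊ : ℝ≥0∞) ∂μ ≤ 1 := by
            exact eLpNorm_one_eq_lintegral_enorm.symm.le.trans hg1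
          have := (ENNReal.toReal_le_toReal (ne_top_of_le_ne_top ENNReal.one_ne_top h2)
            ENNReal.one_ne_top).2 h2
          simpa using this
        have h3 : 0 ≤ (psiCoeff μ mG mH).toReal := ENNReal.toReal_nonneg
        have h4 : 0 ≤ (μ A).toReal := ENNReal.toReal_nonneg
        have h5 : 0 ≤ (∫⁻ x, (‖g x‖₊ : ℝ≥0∞) ∂μ).toReal := ENNReal.toReal_nonneg
        nlinarith [mul_le_mul_of_nonneg_left hL (mul_nonneg h3 h4)]
      have hae : ∀ᵐ x ∂μ, |(μ[g|mG]) x - m| ≤ (psiCoeff μ mG mH).toReal :=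
        ae_bound_of_setIntegral μ hG
          (stronglyMeasurable_condExp.sub stronglyMeasurable_const)
          (integrable_condExp.sub (integrable_const m)) ENNReal.toReal_nonneg hbound
      calc eLpNorm (fun ω => (μ[g|mG]) ω - m) ⊤ μ
          = eLpNormEssSup (fun ω => (μ[g|mG]) ω - m) μ := eLpNorm_exponent_top
        _ ≤ ENNReal.ofReal (psiCoeff μ mG mH).toReal :=
            eLpNormEssSup_le_of_ae_bound
              (hae.mono fun x hx => by rwa [Real.norm_eq_abs])
        _ = psiCoeff μ mG mH := ENNReal.ofReal_toReal hψtop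
    · -- ψ ≤ ϖ_{1,∞}
      apply sSup_le
      rintro r ⟨A, B, hA, hB, hpos, rfl⟩
      have haR : 0 < (μ A).toReal ∧ 0 < (μ B).toReal := by
        rcases mul_pos_iff.1 hpos with ⟨h1, h2⟩ | ⟨h1, h2⟩
        · exact ⟨h1, h2⟩
        · exact absurd h1 (not_lt.2 ENNReal.toReal_nonneg)
      obtain ⟨haR, hbR⟩ := haR
      have hBfin : μ B ≠ ⊤ := measure_ne_top μ B
      have hBne : μ B ≠ 0 := by
        intro h; rw [h] at hbR; simp at hbR
      set bR := (μ B).toReal with hbRdef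
      set g : Ω → ℝ := B.indicator (fun _ => bR⁻¹) with hgdef
      have hgH : Measurable[mH] g := measurable_const.indicator hB
      have hBF : MeasurableSet[F] B := hH _ hB
      have hg1 : eLpNorm g 1 μ = 1 := by
        rw [eLpNorm_one_eq_lintegral_enorm]; simp only [enorm_eq_nnnorm]
        have hcongr : ∀ x, (‖g x‖₊ : ℝ≥0∞) =
            B.indicator (fun _ => ENNReal.ofReal bR⁻¹) x := by
          intro x
          by_cases hx : x ∈ B
          · simp only [hgdef, Set.indicator_of_mem hx, ← enorm_eq_nnnorm, ← ofReal_norm,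
              Real.norm_eq_abs, abs_of_nonneg (inv_nonneg.2 hbR.le)]
          · simp [hgdef, Set.indicator_of_notMem hx]
        rw [lintegral_congr hcongr, aux_lintegral_indicator μ hBF,
          ← ENNReal.ofReal_toReal hBfin, ← hbRdef, ← ENNReal.ofReal_mul
          (inv_nonneg.2 hbR.le), inv_mul_cancel₀ hbR.ne', ENNReal.ofReal_one]
      have hgint : Integrable g μ :=
        memLp_one_iff_integrable.1 ⟨(hgH.mono hH le_rfl).aestronglyMeasurable,
          by rw [hg1]; exact ENNReal.one_lt_top⟩
      have hIg : ∫ x, g x ∂μ = 1 := by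
        rw [hgdef, aux_integral_indicator_const μ hBF, ← hbRdef,
          mul_inv_cancel₀ hbR.ne']
      set M := eLpNorm (fun ω => (μ[g|mG]) ω - ∫ x, g x ∂μ) ⊤ μ with hMdef
      have hMmem : M ≤ varpiCoeff μ mG mH 1 ⊤ := le_sSup ⟨g, hgH, le_of_eq hg1, rfl⟩
      refine le_trans ?_ hMmem
      by_cases hMtop : M = ⊤
      · rw [hMtop]; exact le_top
      have haeM : ∀ᵐ x ∂μ, |(μ[g|mG]) x - ∫ y, g y ∂μ| ≤ M.toReal := by
        have h1 := enorm_ae_le_eLpNormEssSup (fun ω => (μ[g|mG]) ω - ∫ y, g y ∂μ) μ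
        have hMeq : M = eLpNormEssSup (fun ω => (μ[g|mG]) ω - ∫ y, g y ∂μ) μ := by
          rw [hMdef]; exact eLpNorm_exponent_top
        filter_upwards [h1] with x hx
        rw [← hMeq] at hx
        have h2 := (ENNReal.toReal_le_toReal ENNReal.coe_ne_top hMtop).2 hx
        rw [ENNReal.coe_toReal, coe_nnnorm, Real.norm_eq_abs] at h2
        exact h2
      have hintM : Integrable (fun ω => (μ[g|mG]) ω - ∫ y, g y ∂μ) μ :=
        integrable_condExp.sub (integrable_const _)
      have hIA : |∫ x in A, ((μ[g|mG]) x - ∫ y, g y ∂μ) ∂μ| ≤ M.toReal * (μ A).toReal := by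
        rw [← Real.norm_eq_abs]
        refine (norm_integral_le_integral_norm _).trans ?_
        have h3 : ∫ x in A, ‖(μ[g|mG]) x - ∫ y, g y ∂μ‖ ∂μ ≤ ∫ _ in A, M.toReal ∂μ := by
          refine integral_mono_ae hintM.restrict.norm (integrable_const _)
            (ae_restrict_of_ae ?_)
          exact haeM.mono fun x hx => by simpa [Real.norm_eq_abs] using hx
        refine h3.trans ?_
        rw [aux_setIntegral_const μ, mul_comm]
      have hIAval : ∫ x in A, ((μ[g|mG]) x - ∫ y, g y ∂μ) ∂μ =
          bR⁻¹ * (μ (A ∩ B)).toReal - (μ A).toReal := by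
        rw [integral_sub integrable_condExp.restrict (integrable_const _),
          setIntegral_condExp hG hgint hA, hIg, aux_setIntegral_const μ, mul_one]
        congr 1
        rw [hgdef, aux_integral_indicator_const (μ.restrict A) hBF,
          Measure.restrict_apply hBF, Set.inter_comm, mul_comm]
      have hexpr : |(μ (A ∩ B)).toReal / ((μ A).toReal * (μ B).toReal) - 1| ≤ M.toReal := by
        have h2 : |bR⁻¹ * (μ (A ∩ B)).toReal - (μ A).toReal| ≤ M.toReal * (μ A).toReal := by
          rw [← hIAval]; exact hIA
        have h4 : (μ (A ∩ B)).toReal / ((μ A).toReal * (μ B).toReal) - 1 =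
            (bR⁻¹ * (μ (A ∩ B)).toReal - (μ A).toReal) / (μ A).toReal := by
          rw [← hbRdef]
          field_simp
        rw [h4, abs_div, abs_of_pos haR, div_le_iff₀ haR]
        linarith [h2]
      exact (ENNReal.ofReal_le_ofReal hexpr).trans (le_of_eq (ENNReal.ofReal_toReal hMtop))
end

section
/- Let (M_j)_{j=0}^{n-1} be a reverse martingale difference sequence (E[M_j | G_{j+1}] = 0 for a decreasing filtration (G_j), M_j being G_j-measurable) with sup_j ‖M_j‖_{L^q} ≤ K < ∞ for some q ≥ 2. Then ‖∑_{j=0}^{n-1} M_j‖_{L^q} ≤ C_q K √n, where C_q depends only on q. -/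
open MeasureTheory Finset

noncomputable def Dq (q : ℝ) : ℝ := q * q * 2 ^ q + 2 ^ q + q + 1

/-- Bernoulli-type upper bound : `x^p ≤ 1 + p(x-1)x^(p-1)` for `x > 0`, `p ≥ 1`. -/
lemma bern_upper {x p : ℝ} (hx : 0 < x) (hp : 1 ≤ p) :
    x ^ p ≤ 1 + p * (x - 1) * x ^ (p - 1) := by
  have hs : -1 ≤ (1 - x) / x := by
    rw [le_div_iff₀ hx]; nlinarith
  have h := one_add_mul_self_le_rpow_one_add hs hp
  have hbase : 1 + (1 - x) / x = 1 / x := by field_simp; ring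
  rw [hbase, one_div, Real.inv_rpow hx.le] at h
  have hxp : 0 < x ^ p := Real.rpow_pos_of_pos hx p
  have h2 := mul_le_mul_of_nonneg_right h hxp.le
  rw [inv_mul_cancel₀ hxp.ne'] at h2
  have hxp1 : x ^ (p - 1) = x ^ p / x := by
    rw [Real.rpow_sub hx, Real.rpow_one]
  rw [hxp1]
  have hexp : (1 + p * ((1 - x) / x)) * x ^ p = x ^ p + p * (1 - x) * (x ^ p / x) := by
    field_simp
  rw [hexp] at h2
  nlinarith [h2]

/-- Quadratic upper bound for `x^q` near 1, on `[0,2]`. -/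
lemma quad_bound {x q : ℝ} (hx0 : 0 ≤ x) (hx2 : x ≤ 2) (hq : 2 ≤ q) :
    x ^ q ≤ 1 + q * (x - 1) + q * q * 2 ^ q * (x - 1) ^ 2 := by
  have h2q : (1:ℝ) ≤ 2 ^ q := Real.one_le_rpow one_le_two (by linarith)
  rcases eq_or_lt_of_le hx0 with h0 | h0
  · rw [← h0, Real.zero_rpow (by positivity)]
    nlinarith
  have h1 := bern_upper h0 (by linarith : 1 ≤ q)
  have h22 : (1:ℝ) ≤ 2 ^ (q - 2) := Real.one_le_rpow one_le_two (by linarith)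
  have key : (x - 1) * (x ^ (q - 1) - 1) ≤ (q - 1) * 2 ^ (q - 2) * (x - 1) ^ 2 := by
    rcases le_total x 1 with hx1 | hx1
    · have hb := one_add_mul_self_le_rpow_one_add (s := x - 1) (by linarith) (p := q - 1)
        (by linarith)
      have hxx : (1 : ℝ) + (x - 1) = x := by ring
      rw [hxx] at hb
      have h3 : 1 - x ^ (q - 1) ≤ (q - 1) * (1 - x) := by nlinarith
      have h4 : (0:ℝ) ≤ 1 - x := by linarith
      have h5 := mul_le_mul_of_nonneg_left h3 h4
      nlinarith [mul_nonneg (mul_nonneg (by linarith : (0:ℝ) ≤ q - 1)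
        (by linarith : (0:ℝ) ≤ 2 ^ (q - 2) - 1)) (sq_nonneg (x - 1))]
    · have h2 := bern_upper h0 (by linarith : 1 ≤ q - 1)
      have hxq2 : x ^ (q - 1 - 1) ≤ 2 ^ (q - 2) := by
        have he : q - 1 - 1 = q - 2 := by ring
        rw [he]; exact Real.rpow_le_rpow hx0 hx2 (by linarith)
      have h5 : x ^ (q - 1) - 1 ≤ (q - 1) * 2 ^ (q - 2) * (x - 1) := by
        nlinarith [mul_le_mul_of_nonneg_left hxq2
          (mul_nonneg (by linarith : (0:ℝ) ≤ q - 1) (by linarith : (0:ℝ) ≤ x - 1))]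
      nlinarith [mul_le_mul_of_nonneg_left h5 (by linarith : (0:ℝ) ≤ x - 1)]
  have hc : q * ((q - 1) * 2 ^ (q - 2)) ≤ q * q * 2 ^ q := by
    have hle : (2:ℝ) ^ (q - 2) ≤ 2 ^ q :=
      Real.rpow_le_rpow_of_exponent_le one_le_two (by linarith)
    have h2q2 : (0:ℝ) < 2 ^ (q - 2) := Real.rpow_pos_of_pos two_pos _
    nlinarith
  nlinarith [mul_le_mul_of_nonneg_left key (by linarith : (0:ℝ) ≤ q), sq_nonneg (x - 1),
    mul_le_mul_of_nonneg_right hc (sq_nonneg (x - 1))]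

/-- `|a|^(q-2) * a^2 = |a|^q` (also valid at `a = 0` for `q > 0`, in particular `q ≥ 2`). -/
lemma abs_rpow_sub_two_mul_sq {a q : ℝ} (hq : 2 ≤ q) :
    |a| ^ (q - 2) * a ^ 2 = |a| ^ q := by
  rcases eq_or_ne a 0 with rfl | ha
  · simp [Real.zero_rpow (by positivity : q ≠ 0)]
  · have h0 : (0:ℝ) < |a| := abs_pos.2 ha
    rw [← sq_abs, ← Real.rpow_natCast |a| 2, ← Real.rpow_add h0]
    norm_num

/-- Young-type splitting of the cross quadratic term. -/
lemma young_split {a b ε q : ℝ} (hε : 0 < ε) (hq : 2 ≤ q) :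
    |a| ^ (q - 2) * b ^ 2 ≤ ε * |a| ^ q + ε ^ (-(q - 2) / 2) * |b| ^ q := by
  have hbq : (0:ℝ) ≤ |b| ^ q := Real.rpow_nonneg (abs_nonneg b) q
  have haq2 : (0:ℝ) ≤ |a| ^ (q - 2) := Real.rpow_nonneg (abs_nonneg a) _
  have hεq : (0:ℝ) < ε ^ (-(q - 2) / 2) := Real.rpow_pos_of_pos hε _
  rcases le_or_gt (b ^ 2) (ε * a ^ 2) with h | h
  · have : |a| ^ (q - 2) * b ^ 2 ≤ |a| ^ (q - 2) * (ε * a ^ 2) :=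
      mul_le_mul_of_nonneg_left h haq2
    rw [show |a| ^ (q - 2) * (ε * a ^ 2) = ε * (|a| ^ (q - 2) * a ^ 2) by ring,
      abs_rpow_sub_two_mul_sq hq] at this
    nlinarith
  · -- a^2 < b^2/ε
    have hb0 : (0:ℝ) < b ^ 2 := lt_of_le_of_lt (by positivity) h
    have ha2 : a ^ 2 ≤ b ^ 2 / ε := by rw [le_div_iff₀ hε]; nlinarith
    have hmono : (a ^ 2) ^ ((q - 2) / 2) ≤ (b ^ 2 / ε) ^ ((q - 2) / 2) :=
      Real.rpow_le_rpow (by positivity) ha2 (by linarith)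
    have hA : (a ^ 2) ^ ((q - 2) / 2) = |a| ^ (q - 2) := by
      rw [← sq_abs, ← Real.rpow_natCast |a| 2, ← Real.rpow_mul (abs_nonneg a)]
      rw [show ((2:ℕ):ℝ) * ((q - 2) / 2) = q - 2 by push_cast; ring]
    have hB : (b ^ 2 / ε) ^ ((q - 2) / 2) = |b| ^ (q - 2) * ε ^ (-(q - 2) / 2) := by
      rw [Real.div_rpow (by positivity) hε.le, ← sq_abs b, ← Real.rpow_natCast |b| 2,
        ← Real.rpow_mul (abs_nonneg b), show ((2:ℕ):ℝ) * ((q - 2) / 2) = q - 2 by push_cast; ring,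
        div_eq_mul_inv, ← Real.rpow_neg hε.le, show -((q-2)/2) = (-(q - 2) / 2) by ring]
    have hstep : |a| ^ (q - 2) * b ^ 2 ≤ |b| ^ (q - 2) * ε ^ (-(q - 2) / 2) * b ^ 2 := by
      rw [← hA]
      exact mul_le_mul_of_nonneg_right (hB ▸ hmono) hb0.le
    have hfin : |b| ^ (q - 2) * b ^ 2 = |b| ^ q := abs_rpow_sub_two_mul_sq hq
    have haq : (0:ℝ) ≤ |a| ^ q := Real.rpow_nonneg (abs_nonneg a) q
    nlinarith [hstep]

lemma rpow_sub_one_mul {c q : ℝ} (hc : 0 ≤ c) (hq : 1 < q) : c ^ (q - 1) * c = c ^ q := by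
  rcases eq_or_lt_of_le hc with h | h
  · rw [← h, Real.zero_rpow (by linarith), Real.zero_rpow (by linarith), mul_zero]
  · calc c ^ (q - 1) * c = c ^ (q - 1) * c ^ (1:ℝ) := by rw [Real.rpow_one]
      _ = c ^ (q - 1 + 1) := (Real.rpow_add h _ _).symm
      _ = c ^ q := by ring_nf

lemma rpow_sub_two_mul {c q : ℝ} (hc : 0 ≤ c) (hq : 2 ≤ q) : c ^ (q - 2) * c = c ^ (q - 1) := by
  rcases eq_or_lt_of_le hc with h | h
  · rw [← h, mul_zero, Real.zero_rpow (by linarith)]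
  · calc c ^ (q - 2) * c = c ^ (q - 2) * c ^ (1:ℝ) := by rw [Real.rpow_one]
      _ = c ^ (q - 2 + 1) := (Real.rpow_add h _ _).symm
      _ = c ^ (q - 1) := by ring_nf

lemma cross_abs_eq {a b q : ℝ} (hq : 2 ≤ q) :
    |(|a| ^ (q - 2) * a * b)| = |a| ^ (q - 1) * |b| := by
  rw [abs_mul, abs_mul, abs_of_nonneg (Real.rpow_nonneg (abs_nonneg a) _),
    rpow_sub_two_mul (abs_nonneg a) hq]

lemma Dq_pos {q : ℝ} (hq : 2 ≤ q) : 0 < Dq q := by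
  have : (0:ℝ) < 2 ^ q := Real.rpow_pos_of_pos two_pos q
  unfold Dq; nlinarith

/-- Main pointwise inequality. -/
lemma pointwise_main {a b ε q : ℝ} (hq : 2 ≤ q) (hε : 0 < ε) :
    |a + b| ^ q ≤ (1 + Dq q * ε) * |a| ^ q + q * (|a| ^ (q - 2) * a * b)
      + Dq q * (ε ^ (-(q - 2) / 2) + 1) * |b| ^ q := by
  have h2q : (0:ℝ) < 2 ^ q := Real.rpow_pos_of_pos two_pos q
  have hyq : (0:ℝ) < ε ^ (-(q - 2) / 2) := Real.rpow_pos_of_pos hε _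
  have hεq : (1:ℝ) ≤ ε ^ (-(q - 2) / 2) + 1 := by linarith
  have haq : (0:ℝ) ≤ |a| ^ q := Real.rpow_nonneg (abs_nonneg a) q
  have hbq : (0:ℝ) ≤ |b| ^ q := Real.rpow_nonneg (abs_nonneg b) q
  have hD := Dq_pos hq
  have hq0 : (0:ℝ) < q := by linarith
  rcases le_or_gt |b| |a| with hab | hab
  · rcases eq_or_ne a 0 with rfl | ha
    · have hb : b = 0 := by simpa using hab
      subst hb
      norm_num [Real.zero_rpow (show q ≠ 0 by positivity)]
    · have ha0 : (0:ℝ) < |a| := abs_pos.2 ha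
      set t : ℝ := b / a with ht
      have hto : |t| ≤ 1 := by
        rw [ht, abs_div, div_le_one ha0]; exact hab
      have hx0 : (0:ℝ) ≤ 1 + t := by cases abs_le.1 hto; linarith
      have hx2 : 1 + t ≤ 2 := by cases abs_le.1 hto; linarith
      have habs : |a + b| = |a| * (1 + t) := by
        have : a + b = a * (1 + t) := by rw [ht]; field_simp
        rw [this, abs_mul, abs_of_nonneg hx0]
      have hq' := quad_bound hx0 hx2 hq
      rw [show (1 + t - 1) = t by ring] at hq'
      have hmul : |a + b| ^ q = |a| ^ q * (1 + t) ^ q := by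
        rw [habs, Real.mul_rpow (abs_nonneg a) hx0]
      have hstep : |a + b| ^ q ≤ |a| ^ q * (1 + q * t + q * q * 2 ^ q * t ^ 2) := by
        rw [hmul]
        apply mul_le_mul_of_nonneg_left _ haq
        linarith
      have hsq : |a| ^ q = |a| ^ (q - 2) * a ^ 2 := (abs_rpow_sub_two_mul_sq hq).symm
      have hid1 : |a| ^ q * t = |a| ^ (q - 2) * a * b := by
        rw [hsq, ht]; field_simp
      have hid2 : |a| ^ q * t ^ 2 = |a| ^ (q - 2) * b ^ 2 := by
        rw [hsq, ht]; field_simp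
      have hy := young_split (a := a) (b := b) hε hq
      have hC : q * q * 2 ^ q ≤ Dq q := by unfold Dq; linarith
      have hCpos : (0:ℝ) < q * q * 2 ^ q := by positivity
      have e1 : q * q * 2 ^ q * ε * |a| ^ q ≤ Dq q * ε * |a| ^ q :=
        mul_le_mul_of_nonneg_right (mul_le_mul_of_nonneg_right hC hε.le) haq
      have e2 : q * q * 2 ^ q * (ε ^ (-(q - 2) / 2) * |b| ^ q) ≤
          Dq q * (ε ^ (-(q - 2) / 2) * |b| ^ q) :=
        mul_le_mul_of_nonneg_right hC (mul_nonneg hyq.le hbq)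
      have e3 : (0:ℝ) ≤ Dq q * |b| ^ q := mul_nonneg hD.le hbq
      have hyC := mul_le_mul_of_nonneg_left hy hCpos.le
      calc |a + b| ^ q ≤ |a| ^ q * (1 + q * t + q * q * 2 ^ q * t ^ 2) := hstep
        _ = |a| ^ q + q * (|a| ^ q * t) + q * q * 2 ^ q * (|a| ^ q * t ^ 2) := by ring
        _ = |a| ^ q + q * (|a| ^ (q - 2) * a * b)
            + q * q * 2 ^ q * (|a| ^ (q - 2) * b ^ 2) := by rw [hid1, hid2]
        _ ≤ (1 + Dq q * ε) * |a| ^ q + q * (|a| ^ (q - 2) * a * b)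
            + Dq q * (ε ^ (-(q - 2) / 2) + 1) * |b| ^ q := by
              nlinarith [hyC, e1, e2, e3]
  · -- |a| < |b| : crude bound
    have h1 : |a + b| ^ q ≤ 2 ^ q * |b| ^ q := by
      rw [← Real.mul_rpow two_pos.le (abs_nonneg b)]
      apply Real.rpow_le_rpow (abs_nonneg _) _ (by linarith)
      calc |a + b| ≤ |a| + |b| := abs_add_le a b
        _ ≤ 2 * |b| := by nlinarith [abs_nonneg a]
    have h2 : |(|a| ^ (q - 2) * a * b)| ≤ |b| ^ q := by
      rw [cross_abs_eq hq]
      calc |a| ^ (q - 1) * |b| ≤ |b| ^ (q - 1) * |b| :=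
            mul_le_mul_of_nonneg_right
              (Real.rpow_le_rpow (abs_nonneg a) hab.le (by linarith)) (abs_nonneg b)
        _ = |b| ^ q := rpow_sub_one_mul (abs_nonneg b) (by linarith)
    have h3 : -(q * |b| ^ q) ≤ q * (|a| ^ (q - 2) * a * b) := by
      have hle : -(|b| ^ q) ≤ |a| ^ (q - 2) * a * b :=
        le_trans (neg_le_neg h2) (neg_abs_le _)
      have := mul_le_mul_of_nonneg_left hle hq0.le
      linarith
    have hDb : (2 ^ q + q) * |b| ^ q ≤ Dq q * (ε ^ (-(q - 2) / 2) + 1) * |b| ^ q := by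
      apply mul_le_mul_of_nonneg_right _ hbq
      calc (2:ℝ) ^ q + q ≤ Dq q := by
            unfold Dq
            nlinarith [mul_nonneg (mul_nonneg hq0.le hq0.le) h2q.le]
        _ = Dq q * 1 := by ring
        _ ≤ Dq q * (ε ^ (-(q - 2) / 2) + 1) := mul_le_mul_of_nonneg_left hεq hD.le
    have h4 : (0:ℝ) ≤ (1 + Dq q * ε) * |a| ^ q :=
      mul_nonneg (by nlinarith) haq
    linarith [h1, h3, hDb, h4]

lemma cross_le_add {a b q : ℝ} (hq : 2 ≤ q) :
    |(|a| ^ (q - 2) * a * b)| ≤ |a| ^ q + |b| ^ q := by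
  rw [cross_abs_eq hq]
  rcases le_total |b| |a| with h | h
  · calc |a| ^ (q - 1) * |b| ≤ |a| ^ (q - 1) * |a| :=
        mul_le_mul_of_nonneg_left h (Real.rpow_nonneg (abs_nonneg a) _)
      _ = |a| ^ q := rpow_sub_one_mul (abs_nonneg a) (by linarith)
      _ ≤ |a| ^ q + |b| ^ q := by nlinarith [Real.rpow_nonneg (abs_nonneg b) q]
  · calc |a| ^ (q - 1) * |b| ≤ |b| ^ (q - 1) * |b| :=
        mul_le_mul_of_nonneg_right
          (Real.rpow_le_rpow (abs_nonneg a) h (by linarith)) (abs_nonneg b)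
      _ = |b| ^ q := rpow_sub_one_mul (abs_nonneg b) (by linarith)
      _ ≤ |a| ^ q + |b| ^ q := by nlinarith [Real.rpow_nonneg (abs_nonneg a) q]

/-- One-step inequality for the expansion of the `q`-th moment. -/
lemma step_ineq {Ω : Type} {m0 : MeasurableSpace Ω} {μ : Measure Ω}
    [IsProbabilityMeasure μ] {m : MeasurableSpace Ω} (hm : m ≤ m0)
    {q : ℝ} (hq : 2 ≤ q) {g f : Ω → ℝ}
    (hgm : StronglyMeasurable[m] g) (hgL : MemLp g (ENNReal.ofReal q) μ)
    (hfL : MemLp f (ENNReal.ofReal q) μ) (hf0 : μ[f|m] =ᵐ[μ] 0)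
    {ε : ℝ} (hε : 0 < ε) :
    ∫ ω, |g ω + f ω| ^ q ∂μ ≤
      (1 + Dq q * ε) * ∫ ω, |g ω| ^ q ∂μ +
      (Dq q * (ε ^ (-(q - 2) / 2) + 1)) * ∫ ω, |f ω| ^ q ∂μ := by
  have hq0 : (0:ℝ) < q := by linarith
  have hp0 : (ENNReal.ofReal q) ≠ 0 := by
    simp [ENNReal.ofReal_eq_zero]; linarith
  have hptop : (ENNReal.ofReal q) ≠ ⊤ := ENNReal.ofReal_ne_top
  have hpreal : (ENNReal.ofReal q).toReal = q := ENNReal.toReal_ofReal hq0.le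
  -- integrability of the q-th powers
  have hIg : Integrable (fun ω => |g ω| ^ q) μ := by
    have := hgL.integrable_norm_rpow hp0 hptop
    simpa [Real.norm_eq_abs, hpreal] using this
  have hIf : Integrable (fun ω => |f ω| ^ q) μ := by
    have := hfL.integrable_norm_rpow hp0 hptop
    simpa [Real.norm_eq_abs, hpreal] using this
  have hIgf : Integrable (fun ω => |g ω + f ω| ^ q) μ := by
    have := (hgL.add hfL).integrable_norm_rpow hp0 hptop
    simpa [Real.norm_eq_abs, hpreal] using this
  -- the cross term
  set φ : Ω → ℝ := fun ω => |g ω| ^ (q - 2) * g ω with hφ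
  have hφm : StronglyMeasurable[m] φ := by
    have hgme : Measurable[m] g := hgm.measurable
    have hc : Measurable fun y : ℝ => y ^ (q - 2) :=
      (Real.continuous_rpow_const (by linarith : (0:ℝ) ≤ q - 2)).measurable
    exact ((hc.comp hgme.abs).mul hgme).stronglyMeasurable
  have hφf_meas : AEStronglyMeasurable[m0] (fun ω => φ ω * f ω) μ :=
    ((hφm.mono hm).aestronglyMeasurable.mul hfL.1)
  have hIφf : Integrable (fun ω => φ ω * f ω) μ := by
    apply Integrable.mono' (hIg.add hIf) hφf_meas
    filter_upwards with ω
    simp only [Real.norm_eq_abs, hφ]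
    exact cross_le_add hq
  have hIf1 : Integrable f μ := hfL.integrable (by
    simpa using ENNReal.one_le_ofReal.2 (by linarith : 1 ≤ q))
  -- the cross term integrates to zero
  have hzero : ∫ ω, φ ω * f ω ∂μ = 0 := by
    have hpull : μ[φ * f|m] =ᵐ[μ] φ * μ[f|m] :=
      condExp_mul_of_stronglyMeasurable_left hφm (by exact hIφf) hIf1
    have h2 : μ[φ * f|m] =ᵐ[μ] 0 := by
      refine hpull.trans ?_
      filter_upwards [hf0] with ω hω
      simp [Pi.mul_apply, hω]
    calc ∫ ω, φ ω * f ω ∂μ = ∫ ω, (μ[φ * f|m]) ω ∂μ := by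
          rw [integral_condExp hm]; rfl
      _ = ∫ ω, (0:Ω → ℝ) ω ∂μ := integral_congr_ae h2
      _ = 0 := by simp
  -- pointwise bound and integration
  have hpt : ∀ ω, |g ω + f ω| ^ q ≤
      (1 + Dq q * ε) * |g ω| ^ q + q * (φ ω * f ω)
        + (Dq q * (ε ^ (-(q - 2) / 2) + 1)) * |f ω| ^ q := by
    intro ω
    simpa [hφ, mul_assoc] using pointwise_main (a := g ω) (b := f ω) hq hε
  have hRHS : Integrable (fun ω => (1 + Dq q * ε) * |g ω| ^ q + q * (φ ω * f ω)
      + (Dq q * (ε ^ (-(q - 2) / 2) + 1)) * |f ω| ^ q) μ :=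
    ((hIg.const_mul _).add (hIφf.const_mul _)).add (hIf.const_mul _)
  have hint := integral_mono hIgf hRHS hpt
  have hs : ∫ a, ((1 + Dq q * ε) * |g a| ^ q + q * (φ a * f a)
      + (Dq q * (ε ^ (-(q - 2) / 2) + 1)) * |f a| ^ q) ∂μ
      = (1 + Dq q * ε) * ∫ a, |g a| ^ q ∂μ + q * ∫ a, φ a * f a ∂μ
        + (Dq q * (ε ^ (-(q - 2) / 2) + 1)) * ∫ a, |f a| ^ q ∂μ := by
    have hI1 : Integrable (fun a => (1 + Dq q * ε) * |g a| ^ q) μ := hIg.const_mul _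
    have hI2 : Integrable (fun a => q * (φ a * f a)) μ := hIφf.const_mul _
    have hI3 : Integrable (fun a => (Dq q * (ε ^ (-(q - 2) / 2) + 1)) * |f a| ^ q) μ :=
      hIf.const_mul _
    have hI12 : Integrable (fun a => (1 + Dq q * ε) * |g a| ^ q + q * (φ a * f a)) μ :=
      hI1.add hI2
    rw [integral_add hI12 hI3, integral_add hI1 hI2,
      integral_const_mul, integral_const_mul, integral_const_mul]
  rw [hs, hzero] at hint
  linarith [hint]

/-- From an `eLpNorm` bound to a moment bound. -/
lemma int_rpow_le_of_eLpNorm_le {Ω : Type} {m0 : MeasurableSpace Ω} {μ : Measure Ω}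
    [IsProbabilityMeasure μ] {q K : ℝ} (hq : 2 ≤ q) (hK : 0 ≤ K) {f : Ω → ℝ}
    (hf : MemLp f (ENNReal.ofReal q) μ)
    (h : eLpNorm f (ENNReal.ofReal q) μ ≤ ENNReal.ofReal K) :
    ∫ ω, |f ω| ^ q ∂μ ≤ K ^ q := by
  have hq0 : (0:ℝ) < q := by linarith
  have hp0 : (ENNReal.ofReal q) ≠ 0 := by simp [ENNReal.ofReal_eq_zero]; linarith
  have hpreal : (ENNReal.ofReal q).toReal = q := ENNReal.toReal_ofReal hq0.le
  rw [hf.eLpNorm_eq_integral_rpow_norm hp0 ENNReal.ofReal_ne_top, hpreal] at h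
  have h' : (∫ ω, ‖f ω‖ ^ q ∂μ) ^ q⁻¹ ≤ K :=
    (ENNReal.ofReal_le_ofReal_iff hK).1 h
  have hnn : (0:ℝ) ≤ ∫ ω, ‖f ω‖ ^ q ∂μ :=
    integral_nonneg fun ω => Real.rpow_nonneg (norm_nonneg _) q
  have := Real.rpow_le_rpow (Real.rpow_nonneg hnn _) h' hq0.le
  rw [← Real.rpow_mul hnn, inv_mul_cancel₀ hq0.ne', Real.rpow_one] at this
  simpa [Real.norm_eq_abs] using this

/-- Iterated moment bound for reverse martingale difference sequences. -/
lemma iter_bound {q : ℝ} (hq : 2 ≤ q) {ε : ℝ} (hε : 0 < ε) {K : ℝ} (hK : 0 ≤ K) :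
    ∀ (n : ℕ) (Ω : Type) (m0 : MeasurableSpace Ω) (μ : Measure Ω),
      IsProbabilityMeasure μ →
      ∀ (𝒢 : ℕ → MeasurableSpace Ω), (∀ j, 𝒢 (j + 1) ≤ 𝒢 j) → (∀ j, 𝒢 j ≤ m0) →
      ∀ (M : ℕ → Ω → ℝ), (∀ j, StronglyMeasurable[𝒢 j] (M j)) →
        (∀ j, MemLp (M j) (ENNReal.ofReal q) μ) →
        (∀ j, μ[M j | 𝒢 (j + 1)] =ᵐ[μ] 0) →
        (∀ j, eLpNorm (M j) (ENNReal.ofReal q) μ ≤ ENNReal.ofReal K) →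
      ∫ ω, |∑ j ∈ Finset.range n, M j ω| ^ q ∂μ ≤
        (1 + Dq q * ε) ^ n * n * ((Dq q * (ε ^ (-(q - 2) / 2) + 1)) * K ^ q) := by
  intro n
  induction n with
  | zero =>
    intro Ω m0 μ hμ 𝒢 h𝒢 h𝒢m M hMm hML hM0 hMK
    haveI := hμ
    simp [Real.zero_rpow (by positivity : q ≠ 0)]
  | succ n ih =>
    intro Ω m0 μ hμ 𝒢 h𝒢 h𝒢m M hMm hML hM0 hMK
    haveI := hμ
    have hD := Dq_pos hq
    have hanti : Antitone 𝒢 := antitone_nat_of_succ_le h𝒢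
    set g : Ω → ℝ := fun ω => ∑ j ∈ Finset.range n, M (j + 1) ω with hg
    have hsum : ∀ ω, ∑ j ∈ Finset.range (n + 1), M j ω = g ω + M 0 ω := by
      intro ω; rw [hg]; exact Finset.sum_range_succ' (fun j => M j ω) n
    have hgm : StronglyMeasurable[𝒢 1] g := by
      apply Finset.stronglyMeasurable_fun_sum
      intro j _
      exact (hMm (j + 1)).mono (hanti (by omega))
    have hgL : MemLp g (ENNReal.ofReal q) μ :=
      memLp_finset_sum _ (fun j _ => hML (j + 1))
    have hstep := step_ineq (h𝒢m 1) hq hgm hgL (hML 0) (hM0 0) hε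
    have hIH := ih Ω m0 μ hμ (fun j => 𝒢 (j + 1)) (fun j => h𝒢 (j + 1))
      (fun j => h𝒢m (j + 1)) (fun j => M (j + 1)) (fun j => hMm (j + 1))
      (fun j => hML (j + 1)) (fun j => hM0 (j + 1)) (fun j => hMK (j + 1))
    have hK0 : ∫ ω, |M 0 ω| ^ q ∂μ ≤ K ^ q :=
      int_rpow_le_of_eLpNorm_le hq hK (hML 0) (hMK 0)
    have hB : (0:ℝ) ≤ Dq q * (ε ^ (-(q - 2) / 2) + 1) := by
      have := Real.rpow_pos_of_pos hε (-(q - 2) / 2)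
      nlinarith
    have hKq : (0:ℝ) ≤ K ^ q := Real.rpow_nonneg hK q
    have h1 : (1:ℝ) ≤ 1 + Dq q * ε := by nlinarith
    have hpow1 : (1:ℝ) ≤ (1 + Dq q * ε) ^ (n + 1) := one_le_pow₀ h1
    calc ∫ ω, |∑ j ∈ Finset.range (n + 1), M j ω| ^ q ∂μ
        = ∫ ω, |g ω + M 0 ω| ^ q ∂μ := by
          congr 1; funext ω; rw [hsum ω]
      _ ≤ (1 + Dq q * ε) * ∫ ω, |g ω| ^ q ∂μ
          + (Dq q * (ε ^ (-(q - 2) / 2) + 1)) * ∫ ω, |M 0 ω| ^ q ∂μ := hstep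
      _ ≤ (1 + Dq q * ε) * ((1 + Dq q * ε) ^ n * n * ((Dq q * (ε ^ (-(q - 2) / 2) + 1)) * K ^ q))
          + (Dq q * (ε ^ (-(q - 2) / 2) + 1)) * K ^ q := by
            have hg_nn : (0:ℝ) ≤ ∫ ω, |g ω| ^ q ∂μ :=
              integral_nonneg fun ω => Real.rpow_nonneg (abs_nonneg _) q
            have := mul_le_mul_of_nonneg_left hIH (by linarith : (0:ℝ) ≤ 1 + Dq q * ε)
            have h2 := mul_le_mul_of_nonneg_left hK0 hB
            linarith
      _ ≤ (1 + Dq q * ε) ^ (n + 1) * ((n : ℝ) + 1) * ((Dq q * (ε ^ (-(q - 2) / 2) + 1)) * K ^ q) := by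
            have hBK : (0:ℝ) ≤ (Dq q * (ε ^ (-(q - 2) / 2) + 1)) * K ^ q := mul_nonneg hB hKq
            have hpn : (0:ℝ) ≤ (1 + Dq q * ε) ^ n := by positivity
            have : (1 + Dq q * ε) * ((1 + Dq q * ε) ^ n * n) = (1 + Dq q * ε) ^ (n + 1) * n := by
              ring
            nlinarith [mul_le_mul_of_nonneg_right hpow1 hBK]
      _ = (1 + Dq q * ε) ^ (n + 1) * ((n + 1 : ℕ) : ℝ)
            * ((Dq q * (ε ^ (-(q - 2) / 2) + 1)) * K ^ q) := by push_cast; ring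

lemma Dq_ge_one {q : ℝ} (hq : 2 ≤ q) : 1 ≤ Dq q := by
  have : (1:ℝ) ≤ 2 ^ q := Real.one_le_rpow one_le_two (by linarith)
  unfold Dq; nlinarith
/-- Burkholder-type bound: for a reverse martingale difference sequence with
`sup_j ‖M_j‖_{L^q} ≤ K`, `q ≥ 2`, one has `‖∑_{j<n} M_j‖_{L^q} ≤ C_q K √n`
with `C_q` depending only on `q`. -/
theorem reverse_martingale_sqrt_n_bound :
    ∀ q : ℝ, 2 ≤ q → ∃ C : ℝ, 0 < C ∧
      ∀ (Ω : Type) (m0 : MeasurableSpace Ω) (μ : Measure Ω),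
        IsProbabilityMeasure μ →
        ∀ (𝒢 : ℕ → MeasurableSpace Ω), (∀ j, 𝒢 (j + 1) ≤ 𝒢 j) → (∀ j, 𝒢 j ≤ m0) →
        ∀ (M : ℕ → Ω → ℝ), (∀ j, StronglyMeasurable[𝒢 j] (M j)) →
          (∀ j, MemLp (M j) (ENNReal.ofReal q) μ) →
          (∀ j, μ[M j | 𝒢 (j + 1)] =ᵐ[μ] 0) →
        ∀ K : ℝ, 0 ≤ K →
          (∀ j, eLpNorm (M j) (ENNReal.ofReal q) μ ≤ ENNReal.ofReal K) →
        ∀ n : ℕ,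
          eLpNorm (fun ω => ∑ j ∈ Finset.range n, M j ω) (ENNReal.ofReal q) μ ≤
            ENNReal.ofReal (C * K * Real.sqrt n) := by
  intro q hq
  have hq0 : (0:ℝ) < q := by linarith
  have hD := Dq_pos hq
  have hD1 := Dq_ge_one hq
  set D := Dq q with hDdef
  refine ⟨2 * D * Real.exp D, by positivity, ?_⟩
  set C : ℝ := 2 * D * Real.exp D with hCdef
  have hexp1 : (1:ℝ) ≤ Real.exp D := by
    rw [← Real.exp_zero]; exact Real.exp_le_exp.2 (by linarith)
  have hC1 : (1:ℝ) ≤ C := by rw [hCdef]; nlinarith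
  intro Ω m0 μ hμ 𝒢 h𝒢 h𝒢m M hMm hML hM0 K hK hMK n
  haveI := hμ
  rcases Nat.eq_zero_or_pos n with rfl | hn
  · simp
  have hn0 : (0:ℝ) < (n:ℝ) := by exact_mod_cast hn
  have hn1 : (1:ℝ) ≤ (n:ℝ) := by exact_mod_cast hn
  have hε : (0:ℝ) < (n:ℝ)⁻¹ := by positivity
  have hiter := iter_bound hq hε hK n Ω m0 μ hμ 𝒢 h𝒢 h𝒢m M hMm hML hM0 hMK
  -- clean up the right-hand side
  have hpow : (1 + D * (n:ℝ)⁻¹) ^ n ≤ Real.exp D := by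
    have h1 : 1 + D * (n:ℝ)⁻¹ ≤ Real.exp (D * (n:ℝ)⁻¹) := by
      have := Real.add_one_le_exp (D * (n:ℝ)⁻¹); linarith
    have h2 : (1 + D * (n:ℝ)⁻¹) ^ n ≤ Real.exp (D * (n:ℝ)⁻¹) ^ n :=
      pow_le_pow_left₀ (by positivity) h1 n
    have h3 : Real.exp (D * (n:ℝ)⁻¹) ^ n = Real.exp ((n:ℝ) * (D * (n:ℝ)⁻¹)) :=
      (Real.exp_nat_mul _ n).symm
    have h4 : (n:ℝ) * (D * (n:ℝ)⁻¹) = D := by field_simp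
    rw [h3, h4] at h2; exact h2
  have hee : ((n:ℝ)⁻¹) ^ (-(q - 2) / 2) = (n:ℝ) ^ ((q - 2) / 2) := by
    rw [Real.inv_rpow hn0.le, ← Real.rpow_neg hn0.le]; ring_nf
  have hnq1 : (1:ℝ) ≤ (n:ℝ) ^ ((q - 2) / 2) :=
    Real.one_le_rpow hn1 (by linarith)
  have hnn' : (0:ℝ) ≤ (n:ℝ) ^ ((q - 2) / 2) := by linarith
  have hKq : (0:ℝ) ≤ K ^ q := Real.rpow_nonneg hK q
  have hmulpow : (n:ℝ) * (n:ℝ) ^ ((q - 2) / 2) = (n:ℝ) ^ (q / 2) := by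
    nth_rewrite 1 [← Real.rpow_one (n:ℝ)]
    rw [← Real.rpow_add hn0]; ring_nf
  have hsq : Real.sqrt n = (n:ℝ) ^ (1/2 : ℝ) := Real.sqrt_eq_rpow _
  have hsqq : (Real.sqrt n) ^ q = (n:ℝ) ^ (q / 2) := by
    rw [hsq, ← Real.rpow_mul hn0.le]; ring_nf
  -- main real bound
  have hmain : ∫ ω, |∑ j ∈ Finset.range n, M j ω| ^ q ∂μ ≤ (C * K * Real.sqrt n) ^ q := by
    have hb1 : (1 + D * (n:ℝ)⁻¹) ^ n * (n:ℝ) * ((D * (((n:ℝ)⁻¹) ^ (-(q - 2) / 2) + 1)) * K ^ q)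
        ≤ Real.exp D * (n:ℝ) * ((D * (2 * (n:ℝ) ^ ((q - 2) / 2))) * K ^ q) := by
      rw [hee]
      have he2 : (n:ℝ) ^ ((q - 2) / 2) + 1 ≤ 2 * (n:ℝ) ^ ((q - 2) / 2) := by linarith
      have hp0 : (0:ℝ) ≤ (1 + D * (n:ℝ)⁻¹) ^ n := by positivity
      have hfac : (0:ℝ) ≤ (D * (2 * (n:ℝ) ^ ((q - 2) / 2))) * K ^ q := by positivity
      have hfac2 : (0:ℝ) ≤ (n:ℝ) * ((D * (2 * (n:ℝ) ^ ((q - 2) / 2))) * K ^ q) := by positivity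
      calc (1 + D * (n:ℝ)⁻¹) ^ n * (n:ℝ) * ((D * ((n:ℝ) ^ ((q - 2) / 2) + 1)) * K ^ q)
          ≤ (1 + D * (n:ℝ)⁻¹) ^ n * (n:ℝ) * ((D * (2 * (n:ℝ) ^ ((q - 2) / 2))) * K ^ q) := by
            apply mul_le_mul_of_nonneg_left _ (by positivity)
            apply mul_le_mul_of_nonneg_right _ hKq
            exact mul_le_mul_of_nonneg_left he2 hD.le
        _ ≤ Real.exp D * (n:ℝ) * ((D * (2 * (n:ℝ) ^ ((q - 2) / 2))) * K ^ q) := by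
            have := mul_le_mul_of_nonneg_right hpow hfac2
            calc (1 + D * (n:ℝ)⁻¹) ^ n * (n:ℝ) * ((D * (2 * (n:ℝ) ^ ((q - 2) / 2))) * K ^ q)
                = (1 + D * (n:ℝ)⁻¹) ^ n * ((n:ℝ) * ((D * (2 * (n:ℝ) ^ ((q - 2) / 2))) * K ^ q)) := by ring
              _ ≤ Real.exp D * ((n:ℝ) * ((D * (2 * (n:ℝ) ^ ((q - 2) / 2))) * K ^ q)) := this
              _ = Real.exp D * (n:ℝ) * ((D * (2 * (n:ℝ) ^ ((q - 2) / 2))) * K ^ q) := by ring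
    have hb2 : Real.exp D * (n:ℝ) * ((D * (2 * (n:ℝ) ^ ((q - 2) / 2))) * K ^ q)
        = C * ((n:ℝ) ^ (q / 2) * K ^ q) := by
      rw [hCdef, ← hmulpow]; ring
    have hb3 : C * ((n:ℝ) ^ (q / 2) * K ^ q) ≤ (C * K * Real.sqrt n) ^ q := by
      have hCq : C ≤ C ^ q := by
        nth_rewrite 1 [← Real.rpow_one C]
        exact Real.rpow_le_rpow_of_exponent_le hC1 (by linarith)
      have hexpand : (C * K * Real.sqrt n) ^ q = C ^ q * ((n:ℝ) ^ (q / 2) * K ^ q) := by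
        rw [Real.mul_rpow (by positivity) (Real.sqrt_nonneg _),
          Real.mul_rpow (by positivity) hK, hsqq]; ring
      rw [hexpand]
      apply mul_le_mul_of_nonneg_right hCq (by positivity)
    calc ∫ ω, |∑ j ∈ Finset.range n, M j ω| ^ q ∂μ
        ≤ (1 + D * (n:ℝ)⁻¹) ^ n * (n:ℝ) * ((D * (((n:ℝ)⁻¹) ^ (-(q - 2) / 2) + 1)) * K ^ q) := hiter
      _ ≤ Real.exp D * (n:ℝ) * ((D * (2 * (n:ℝ) ^ ((q - 2) / 2))) * K ^ q) := hb1
      _ = C * ((n:ℝ) ^ (q / 2) * K ^ q) := hb2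
      _ ≤ (C * K * Real.sqrt n) ^ q := hb3
  -- convert to eLpNorm
  have hp0 : (ENNReal.ofReal q) ≠ 0 := by simp [ENNReal.ofReal_eq_zero]; linarith
  have hpreal : (ENNReal.ofReal q).toReal = q := ENNReal.toReal_ofReal hq0.le
  have hSL : MemLp (fun ω => ∑ j ∈ Finset.range n, M j ω) (ENNReal.ofReal q) μ :=
    memLp_finset_sum _ (fun j _ => hML j)
  rw [hSL.eLpNorm_eq_integral_rpow_norm hp0 ENNReal.ofReal_ne_top, hpreal]
  apply ENNReal.ofReal_le_ofReal
  have hnn : (0:ℝ) ≤ ∫ ω, ‖∑ j ∈ Finset.range n, M j ω‖ ^ q ∂μ :=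
    integral_nonneg fun ω => Real.rpow_nonneg (norm_nonneg _) q
  have hmain' : ∫ ω, ‖∑ j ∈ Finset.range n, M j ω‖ ^ q ∂μ ≤ (C * K * Real.sqrt n) ^ q := by
    simpa [Real.norm_eq_abs] using hmain
  have h5 := Real.rpow_le_rpow hnn hmain' (by positivity : (0:ℝ) ≤ q⁻¹)
  rw [← Real.rpow_mul (by positivity), mul_inv_cancel₀ hq0.ne', Real.rpow_one] at h5
  simpa using h5
end
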